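/- arXiv:math/9909089 — 2 statements merged into one kernel-verified Lean document; each statement's English description precedes it below -/
import Mathlib

section
/- Let T be a semistandard Young tableau and let T = P · Q be any factorization of T in the plactic monoid, where Q has a rows. Then the following are equivalent: (i) T = P · Q is the horizontal cut after the a-th row (Q equals the top a rows of T and P the rest); (ii) for 1 ≤ i ≤ a, the i-th row of T has the same number of boxes as the i-th row of Q; (iii) whenever the top row of P has a box in column j, the a-th row of Q has a box in column j with strictly smaller entry (vacuously true if a = 0). -/
/-- A tableau (or more generally a filling) given by its list of rows, top to bottom. -/
abbrev Tab := List (List ℕ)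

/-- Row insertion: insert `x` into a weakly increasing row, bumping the
leftmost entry strictly greater than `x` (if any). -/
def rowInsert : List ℕ → ℕ → List ℕ × Option ℕ
  | [], x => ([x], none)
  | y :: ys, x =>
    if y ≤ x then
      let r := rowInsert ys x
      (y :: r.1, r.2)
    else (x :: ys, some y)

/-- Insert an entry into a tableau by the row bumping algorithm. -/
def insertEntry : Tab → ℕ → Tab
  | [], x => [[x]]
  | row :: rest, x =>
    match rowInsert row x with
    | (r, none) => r :: rest
    | (r, some y) => r :: insertEntry rest y

/-- The row word of a tableau: rows read bottom to top, each left to right. -/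
def wordOf (t : Tab) : List ℕ := t.reverse.flatten

/-- The plactic product `p · q` of two tableaux, computed by row-inserting
the row word of `q` into `p`. -/
def mulT (p q : Tab) : Tab := (wordOf q).foldl insertEntry p

/-- `t` is a semistandard Young tableau: nonempty weakly increasing rows,
weakly decreasing row lengths, strictly increasing columns. -/
def IsTableau (t : Tab) : Prop :=
  (∀ r ∈ t, r ≠ [] ∧ List.Chain' (· ≤ ·) r) ∧
  List.Chain' (· ≥ ·) (t.map List.length) ∧
  ∀ i j, i + 1 < t.length → j < (t.getD (i+1) []).length →
    (t.getD i []).getD j 0 < (t.getD (i+1) []).getD j 0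

def entry (t : Tab) (i j : ℕ) : ℕ := (t.getD i []).getD j 0

def rowLen (t : Tab) (i : ℕ) : ℕ := (t.getD i []).length

def colHeight (t : Tab) (j : ℕ) : ℕ := (t.filter (fun r => j < r.length)).length

/-- The leftmost `b` columns of a tableau. -/
def leftCols (t : Tab) (b : ℕ) : Tab := (t.map (fun r => r.take b)).filter (fun r => !r.isEmpty)

/-- The part of a tableau strictly to the right of column `b`. -/
def rightCols (t : Tab) (b : ℕ) : Tab := (t.map (fun r => r.drop b)).filter (fun r => !r.isEmpty)

/-- The ring of symmetric functions, `ℤ[h₁, h₂, …]` with `X n` playing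
the role of the complete homogeneous symmetric function `h_{n+1}`. -/
abbrev SymFn := MvPolynomial ℕ ℤ

/-- The complete homogeneous symmetric function `h m` (`1` for `m = 0`, `0` for `m < 0`). -/
noncomputable def hSym (m : ℤ) : SymFn :=
  if m < 0 then 0 else if m = 0 then 1 else MvPolynomial.X (m.toNat - 1)

/-- The Schur function of an integer sequence, by the Jacobi-Trudi determinant. -/
noncomputable def schur (I : List ℤ) : SymFn :=
  Matrix.det (Matrix.of fun i j : Fin I.length => hSym (I.get i + (j : ℤ) - (i : ℤ)))

/-- `S(D)`: the Schur function of the sequence of row lengths of a diagram. -/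
noncomputable def SD (D : Tab) : SymFn := schur (D.map fun r => (r.length : ℤ))

/-- A diagram with weakly increasing rows. -/
def WeakRows (D : Tab) : Prop := ∀ r ∈ D, List.Chain' (· ≤ ·) r

/-- A violation at position `(i, j)` (rows indexed from `0`): a box in row `i ≥ 1`
with no box directly above it, or whose box directly above is not strictly smaller. -/
def ViolAt (D : Tab) (i j : ℕ) : Prop :=
  1 ≤ i ∧ i < D.length ∧ j < rowLen D i ∧
    (rowLen D (i-1) ≤ j ∨ entry D i j ≤ entry D (i-1) j)

/-- `rect D`: the plactic product of the rows of `D`, from bottom to top. -/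
def rect (D : Tab) : Tab := D.reverse.foldl (fun acc r => mulT acc [r]) []

section Dev

local notation "Pw" => List.Pairwise (α := ℕ) (· ≤ ·)

/-! ### rowInsert basics -/

lemma ri_cases (s : List ℕ) (x : ℕ) :
    (rowInsert s x = (s ++ [x], none) ∧ ∀ y ∈ s, y ≤ x) ∨
    (∃ p, p < s.length ∧ rowInsert s x = (s.set p x, some (s.getD p 0)) ∧
      x < s.getD p 0 ∧ ∀ k < p, s.getD k 0 ≤ x) := by
  induction s with
  | nil => exact Or.inl ⟨rfl, by simp⟩
  | cons y s ih =>
    by_cases hyx : y ≤ x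
    · rcases ih with ⟨heq, hall⟩ | ⟨p, hp, heq, hlt, hle⟩
      · refine Or.inl ⟨?_, ?_⟩
        · simp [rowInsert, hyx, heq]
        · intro z hz; rcases List.mem_cons.1 hz with rfl | hz
          · exact hyx
          · exact hall z hz
      · refine Or.inr ⟨p + 1, by simpa using hp, ?_, by simpa using hlt, ?_⟩
        · simp [rowInsert, hyx, heq]
        · intro k hk
          cases k with
          | zero => simpa using hyx
          | succ k => simpa using hle k (by omega)
    · exact Or.inr ⟨0, by simp, by simp [rowInsert, hyx], by simpa using Nat.lt_of_not_le hyx,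
        by omega⟩

lemma isTableau_nil : IsTableau [] := by
  refine ⟨by simp, by simp [List.Chain'], ?_⟩
  intro i j hi; simp at hi

lemma rowLen_nil (i : ℕ) : rowLen ([] : Tab) i = 0 := by simp [rowLen]

lemma isTableau_cons {r : List ℕ} {t : Tab} :
    IsTableau (r :: t) ↔
      r ≠ [] ∧ List.Chain' (· ≤ ·) r ∧ IsTableau t ∧ rowLen t 0 ≤ r.length ∧
      (∀ j < rowLen t 0, r.getD j 0 < entry t 0 j) := by
  constructor
  · rintro ⟨h1, h2, h3⟩
    have hmap : List.Chain' (· ≥ ·) (r.length :: t.map List.length) := by simpa using h2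
    refine ⟨(h1 r (by simp)).1, (h1 r (by simp)).2, ⟨?_, ?_, ?_⟩, ?_, ?_⟩
    · intro s hs; exact h1 s (by simp [hs])
    · exact (List.isChain_cons.1 hmap).2
    · intro i j hi hj
      have := h3 (i + 1) j (by simpa using hi) (by simpa [List.getD] using hj)
      simpa [List.getD] using this
    · cases t with
      | nil => simp [rowLen]
      | cons s t =>
        have := (List.isChain_cons.1 hmap).1
        simpa [rowLen] using this s.length (by simp)
    · intro j hj
      cases t with
      | nil => simp [rowLen] at hj
      | cons s t =>
        have := h3 0 j (by simp) (by simpa [rowLen] using hj)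
        simpa [entry] using this
  · rintro ⟨h1, h2, ⟨t1, t2, t3⟩, h4, h5⟩
    refine ⟨?_, ?_, ?_⟩
    · intro s hs; rcases List.mem_cons.1 hs with rfl | hs
      · exact ⟨h1, h2⟩
      · exact t1 s hs
    · rw [List.map_cons]; simp only [List.Chain']; rw [List.isChain_cons]
      refine ⟨?_, t2⟩
      intro b hb
      cases t with
      | nil => simp at hb
      | cons s t => simp at hb; simpa [rowLen, ← hb] using h4
    · intro i j hi hj
      cases i with
      | zero => have := h5 j (by simpa [rowLen] using hj); simpa [entry] using this
      | succ i =>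
        have := t3 i j (by simpa using hi) (by simpa using hj)
        simpa using this

lemma tab_tail {r : List ℕ} {t : Tab} (h : IsTableau (r :: t)) : IsTableau t :=
  (isTableau_cons.1 h).2.2.1

/-! ### insertion preserves tableaux -/

/-! ### getD helpers -/

lemma getD_set_self {l : List ℕ} {p x : ℕ} (h : p < l.length) : (l.set p x).getD p 0 = x := by
  simp [List.getD_eq_getElem?_getD, List.getElem?_set, h]

lemma getD_set_ne {l : List ℕ} {p j x : ℕ} (h : p ≠ j) : (l.set p x).getD j 0 = l.getD j 0 := by
  simp [List.getD_eq_getElem?_getD, List.getElem?_set, h]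

lemma chain_getD {l : List ℕ} (h : List.Chain' (· ≤ ·) l) {i j : ℕ} (hij : i ≤ j)
    (hj : j < l.length) : l.getD i 0 ≤ l.getD j 0 := by
  rcases eq_or_lt_of_le hij with rfl | hij
  · rfl
  · have := List.isChain_iff_pairwise.1 h
    rw [List.pairwise_iff_getElem] at this
    have := this i j (by omega) hj hij
    rw [List.getD_eq_getElem l 0 (by omega), List.getD_eq_getElem l 0 hj]
    exact this

lemma chain_of_getD {l : List ℕ} (h : ∀ i, i + 1 < l.length → l.getD i 0 ≤ l.getD (i+1) 0) :
    List.Chain' (· ≤ ·) l := by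
  simp only [List.Chain']; rw [List.isChain_iff_getElem]
  intro i hi
  have := h i (by omega)
  rwa [List.getD_eq_getElem l 0 (by omega), List.getD_eq_getElem l 0 (by omega)] at this

lemma getD_append_left {l l' : List ℕ} {j : ℕ} (h : j < l.length) :
    (l ++ l').getD j 0 = l.getD j 0 := by
  simp [List.getD_eq_getElem?_getD, List.getElem?_append_left h]

lemma getD_append_last (l : List ℕ) (x : ℕ) : (l ++ [x]).getD l.length 0 = x := by
  simp [List.getD_eq_getElem?_getD]

lemma exists_getD_of_mem {l : List ℕ} {x : ℕ} (h : x ∈ l) :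
    ∃ i, i < l.length ∧ l.getD i 0 = x := by
  obtain ⟨i, hi, rfl⟩ := List.getElem_of_mem h
  exact ⟨i, hi, List.getD_eq_getElem l 0 hi⟩

lemma getD_mem {l : List ℕ} {i : ℕ} (h : i < l.length) : l.getD i 0 ∈ l := by
  rw [List.getD_eq_getElem l 0 h]; exact List.getElem_mem h

/-! ### insertion preserves tableaux -/

lemma pres {U : Tab} (h : IsTableau U) (x : ℕ) : IsTableau (insertEntry U x) := by
  induction U generalizing x with
  | nil =>
    show IsTableau [[x]]
    rw [isTableau_cons]
    exact ⟨by simp, by simp [List.Chain'], isTableau_nil, by simp [rowLen], by simp [rowLen]⟩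
  | cons row rest ih =>
    obtain ⟨hne, hch, hrest, hlen, hcol⟩ := isTableau_cons.1 h
    rcases ri_cases row x with ⟨heq, hall⟩ | ⟨p, hp, heq, hxlt, hple⟩
    · -- append case
      have hres : insertEntry (row :: rest) x = (row ++ [x]) :: rest := by
        simp [insertEntry, heq]
      rw [hres, isTableau_cons]
      refine ⟨by simp, ?_, hrest, by simp; omega, ?_⟩
      · simp only [List.Chain'] at hch ⊢; rw [List.isChain_iff_pairwise] at hch ⊢
        rw [List.pairwise_append]
        exact ⟨hch, by simp, by simpa using hall⟩
      · intro j hj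
        rw [getD_append_left (by omega)]
        exact hcol j hj
    · -- bump case
      set y := row.getD p 0 with hy
      have hres : insertEntry (row :: rest) x = (row.set p x) :: insertEntry rest y := by
        simp [insertEntry, heq]
      have hsetlen : (row.set p x).length = row.length := by simp
      -- pointwise: new row ≤ old row
      have hre : ∀ j, (row.set p x).getD j 0 ≤ row.getD j 0 := by
        intro j
        rcases eq_or_ne p j with rfl | hpj
        · rw [getD_set_self hp]; exact le_of_lt hxlt
        · rw [getD_set_ne hpj]
      -- entries of row strictly before p are ≤ x < y
      have hlt_y : ∀ j ≤ p, (row.set p x).getD j 0 < y := by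
        intro j hj
        rcases eq_or_lt_of_le hj with rfl | hj
        · rw [getD_set_self hp]; exact hxlt
        · rw [getD_set_ne (by omega)]
          exact lt_of_le_of_lt (hple j hj) hxlt
      rw [hres, isTableau_cons]
      refine ⟨List.length_pos_iff.1 (by rw [hsetlen]; omega), ?_, ih hrest y, ?_, ?_⟩
      · -- new row is weakly increasing
        refine chain_of_getD ?_
        intro i hi
        rw [hsetlen] at hi
        rcases eq_or_ne p i with rfl | hpi
        · rw [getD_set_self hp, getD_set_ne (by omega)]
          exact le_of_lt (lt_of_lt_of_le hxlt (chain_getD hch (by omega) hi))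
        · rw [getD_set_ne hpi]
          rcases eq_or_ne p (i+1) with rfl | hpi1
          · rw [getD_set_self hp]
            exact hple i (by omega)
          · rw [getD_set_ne hpi1]
            exact chain_getD hch (by omega) hi
      · -- length condition
        rw [hsetlen]
        cases rest with
        | nil => simpa [insertEntry, rowLen] using (by omega : 1 ≤ row.length)
        | cons row1 rest2 =>
          have hr1 : rowLen (row1 :: rest2) 0 = row1.length := by simp [rowLen]
          rcases ri_cases row1 y with ⟨heq1, hall1⟩ | ⟨q, hq, heq1, hylt, hqle⟩
          · have hp1 : row1.length ≤ p := by
              by_contra hc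
              push_neg at hc
              have h1 := hcol p (by rw [hr1]; omega)
              have h2 := hall1 _ (getD_mem hc)
              simp only [entry, List.getD_cons_zero] at h1
              omega
            have : rowLen ((rowInsert row1 y).1 :: insertEntry rest2 y) 0 = row1.length + 1 := by
              simp [heq1, rowLen]
            simp only [insertEntry, heq1]
            simp only [rowLen, List.getD_cons_zero, List.length_append, List.length_cons,
              List.length_nil]
            omega
          · simp only [insertEntry, heq1]
            simp only [rowLen, List.getD_cons_zero, List.length_set]
            rw [hr1] at hlen; omega
      · -- column condition
        cases rest with
        | nil =>
          intro j hj
          simp only [insertEntry, rowLen, List.getD_cons_zero, List.length_cons,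
            List.length_nil] at hj
          interval_cases j
          simp only [insertEntry, entry, List.getD_cons_zero]
          exact hlt_y 0 (by omega)
        | cons row1 rest2 =>
          have hr1 : rowLen (row1 :: rest2) 0 = row1.length := by simp [rowLen]
          have hcol' : ∀ j < row1.length, row.getD j 0 < row1.getD j 0 := by
            intro j hj
            have := hcol j (by rw [hr1]; exact hj)
            simpa [entry] using this
          rcases ri_cases row1 y with ⟨heq1, hall1⟩ | ⟨q, hq, heq1, hylt, hqle⟩
          · have hp1 : row1.length ≤ p := by
              by_contra hc
              push_neg at hc
              have h1 := hcol' p hc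
              have h2 := hall1 _ (getD_mem hc)
              omega
            intro j hj
            simp only [insertEntry, heq1, rowLen, entry, List.getD_cons_zero,
              List.length_append, List.length_cons, List.length_nil] at hj ⊢
            rcases Nat.lt_or_ge j row1.length with hjl | hjl
            · rw [getD_append_left hjl]
              exact lt_of_le_of_lt (hre j) (hcol' j hjl)
            · have hj1 : j = row1.length := by omega
              rw [hj1, getD_append_last]
              exact hlt_y row1.length (by omega)
          · intro j hj
            simp only [insertEntry, heq1, rowLen, entry, List.getD_cons_zero,
              List.length_set] at hj ⊢
            have hqp : q ≤ p := by
              by_contra hc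
              push_neg at hc
              have h1 : p < row1.length := by omega
              have h2 := hqle p hc
              have h3 := hcol' p h1
              omega
            rcases eq_or_ne q j with rfl | hqj
            · rw [getD_set_self hq]
              exact hlt_y q hqp
            · rw [getD_set_ne hqj]
              exact lt_of_le_of_lt (hre j) (hcol' j hj)

lemma pres_foldl {U : Tab} (h : IsTableau U) (w : List ℕ) :
    IsTableau (w.foldl insertEntry U) := by
  induction w generalizing U with
  | nil => exact h
  | cons z w ih => exact ih (pres h z)

/-! ### inserting an increasing word -/

lemma ri_append {s : List ℕ} {x : ℕ} (h : ∀ y ∈ s, y ≤ x) :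
    rowInsert s x = (s ++ [x], none) := by
  induction s with
  | nil => rfl
  | cons y s ih =>
    have hy : y ≤ x := h y (by simp)
    simp [rowInsert, hy, ih (fun z hz => h z (by simp [hz]))]

lemma A0 {s R : List ℕ} (rest : Tab) (h : Pw (s ++ R)) :
    R.foldl insertEntry (s :: rest) = (s ++ R) :: rest := by
  induction R generalizing s with
  | nil => simp
  | cons x R ih =>
    have hx : ∀ y ∈ s, y ≤ x := by
      intro y hy
      exact (List.pairwise_append.1 h).2.2 y hy x (by simp)
    have h1 : insertEntry (s :: rest) x = (s ++ [x]) :: rest := by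
      simp [insertEntry, ri_append hx]
    rw [List.foldl_cons, h1, ih (by simpa using h)]
    simp

lemma LD2 {R : List ℕ} {x : ℕ} (hx : ∀ z ∈ R, x ≤ z) (s : List ℕ) (rest : Tab) :
    ∃ w ws, R.foldl insertEntry (s :: rest) = w :: ws ∧
      R.foldl insertEntry ((x :: s) :: rest) = (x :: w) :: ws := by
  induction R generalizing s rest with
  | nil => exact ⟨s, rest, rfl, rfl⟩
  | cons z R ih =>
    have hz : x ≤ z := hx z (by simp)
    have hins : insertEntry ((x :: s) :: rest) z =
        match rowInsert s z with
        | (r, none) => (x :: r) :: rest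
        | (r, some y) => (x :: r) :: insertEntry rest y := by
      rcases hri : rowInsert s z with ⟨r, o⟩
      cases o <;> simp [insertEntry, rowInsert, hz, hri]
    rcases hri : rowInsert s z with ⟨r, o⟩
    cases o with
    | none =>
      have h1 : insertEntry (s :: rest) z = r :: rest := by simp [insertEntry, hri]
      rw [List.foldl_cons, List.foldl_cons, h1, hins, hri]
      exact ih (fun u hu => hx u (by simp [hu])) r rest
    | some y =>
      have h1 : insertEntry (s :: rest) z = r :: insertEntry rest y := by
        simp [insertEntry, hri]
      rw [List.foldl_cons, List.foldl_cons, h1, hins, hri]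
      exact ih (fun u hu => hx u (by simp [hu])) r (insertEntry rest y)

lemma KL' {R s : List ℕ} (rest : Tab) (hR : Pw R) (hlen : s.length ≤ R.length)
    (hpt : ∀ j < s.length, R.getD j 0 < s.getD j 0) :
    R.foldl insertEntry (s :: rest) = R :: s.foldl insertEntry rest := by
  induction s generalizing R rest with
  | nil =>
    cases R with
    | nil => simp
    | cons x R =>
      have h1 : insertEntry ([] :: rest) x = [x] :: rest := by simp [insertEntry, rowInsert]
      rw [List.foldl_cons, h1, A0 rest (by simpa using hR)]
      simp
  | cons y s ih =>
    cases R with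
    | nil => simp at hlen
    | cons x R =>
      have hxy : x < y := by simpa using hpt 0 (by simp)
      have h1 : insertEntry ((y :: s) :: rest) x = (x :: s) :: insertEntry rest y := by
        simp [insertEntry, rowInsert, Nat.not_le.2 hxy]
      rw [List.foldl_cons, h1]
      have hxR : ∀ z ∈ R, x ≤ z := fun z hz => (List.pairwise_cons.1 hR).1 z hz
      obtain ⟨w, ws, hw1, hw2⟩ := LD2 hxR s (insertEntry rest y)
      have hih : R.foldl insertEntry (s :: insertEntry rest y) =
          R :: s.foldl insertEntry (insertEntry rest y) := by
        refine ih (insertEntry rest y) (List.pairwise_cons.1 hR).2 (by simpa using hlen) ?_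
        intro j hj
        simpa using hpt (j+1) (by simpa using hj)
      rw [hih] at hw1
      obtain ⟨rfl, rfl⟩ : R = w ∧ s.foldl insertEntry (insertEntry rest y) = ws :=
        ⟨(List.cons_eq_cons.1 hw1).1, (List.cons_eq_cons.1 hw1).2⟩
      rw [hw2]
      rfl

lemma LC {R : List ℕ} (s : List ℕ) (rest : Tab) (hR : Pw R) :
    R.length ≤ rowLen (R.foldl insertEntry (s :: rest)) 0 := by
  induction s generalizing R rest with
  | nil =>
    induction R generalizing rest with
    | nil => simp
    | cons x R ihR =>
      have h1 : insertEntry ([] :: rest) x = [x] :: rest := by simp [insertEntry, rowInsert]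
      rw [List.foldl_cons, h1]
      have hxR : ∀ z ∈ R, x ≤ z := fun z hz => (List.pairwise_cons.1 hR).1 z hz
      obtain ⟨w, ws, hw1, hw2⟩ := LD2 hxR [] rest
      rw [hw2]
      have := ihR rest (List.pairwise_cons.1 hR).2
      rw [hw1] at this
      simp only [rowLen, List.getD_cons_zero, List.length_cons] at this ⊢
      omega
  | cons y s ih =>
    cases R with
    | nil => simp
    | cons x R =>
      by_cases hxy : y ≤ x
      · have hall : ∀ z ∈ x :: R, y ≤ z := by
          intro z hz
          rcases List.mem_cons.1 hz with rfl | hz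
          · exact hxy
          · exact le_trans hxy ((List.pairwise_cons.1 hR).1 z hz)
        obtain ⟨w, ws, hw1, hw2⟩ := LD2 hall s rest
        rw [hw2]
        have := ih rest hR
        rw [hw1] at this
        simp only [rowLen, List.getD_cons_zero, List.length_cons] at this ⊢
        omega
      · have h1 : insertEntry ((y :: s) :: rest) x = (x :: s) :: insertEntry rest y := by
          simp [insertEntry, rowInsert, hxy]
        rw [List.foldl_cons, h1]
        have hxR : ∀ z ∈ R, x ≤ z := fun z hz => (List.pairwise_cons.1 hR).1 z hz
        obtain ⟨w, ws, hw1, hw2⟩ := LD2 hxR s (insertEntry rest y)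
        rw [hw2]
        have := ih (insertEntry rest y) (List.pairwise_cons.1 hR).2
        rw [hw1] at this
        simp only [rowLen, List.getD_cons_zero, List.length_cons] at this ⊢
        omega

lemma B'' {R s : List ℕ} (rest : Tab) (hR : Pw R) (hs : Pw s)
    (h : rowLen (R.foldl insertEntry (s :: rest)) 0 = R.length) :
    s.length ≤ R.length ∧ ∀ j < s.length, R.getD j 0 < s.getD j 0 := by
  induction s generalizing R rest with
  | nil => simp
  | cons y s ih =>
    cases R with
    | nil =>
      simp only [List.foldl_nil, rowLen, List.getD_cons_zero, List.length_cons,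
        List.length_nil] at h
      omega
    | cons x R =>
      by_cases hxy : y ≤ x
      · exfalso
        have hall : ∀ z ∈ x :: R, y ≤ z := by
          intro z hz
          rcases List.mem_cons.1 hz with rfl | hz
          · exact hxy
          · exact le_trans hxy ((List.pairwise_cons.1 hR).1 z hz)
        obtain ⟨w, ws, hw1, hw2⟩ := LD2 hall s rest
        rw [hw2] at h
        have hlc := LC s rest hR
        rw [hw1] at hlc
        simp only [rowLen, List.getD_cons_zero, List.length_cons] at h hlc
        omega
      · have h1 : insertEntry ((y :: s) :: rest) x = (x :: s) :: insertEntry rest y := by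
          simp [insertEntry, rowInsert, hxy]
        rw [List.foldl_cons, h1] at h
        have hxR : ∀ z ∈ R, x ≤ z := fun z hz => (List.pairwise_cons.1 hR).1 z hz
        obtain ⟨w, ws, hw1, hw2⟩ := LD2 hxR s (insertEntry rest y)
        rw [hw2] at h
        have hin : rowLen (R.foldl insertEntry (s :: insertEntry rest y)) 0 = R.length := by
          rw [hw1]
          rw [hw1] at *
          simp only [rowLen, List.getD_cons_zero, List.length_cons] at h ⊢
          omega
        obtain ⟨hl, hpt⟩ := ih (insertEntry rest y) (List.pairwise_cons.1 hR).2
          (List.pairwise_cons.1 hs).2 hin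
        constructor
        · simpa using hl
        · intro j hj
          cases j with
          | zero => simpa using Nat.lt_of_not_le hxy
          | succ j => simpa using hpt j (by simpa using hj)

/-! ### the key lemma and the horizontal cut -/

lemma wordOf_cons (r : List ℕ) (t : Tab) : wordOf (r :: t) = wordOf t ++ r := by
  simp [wordOf]

lemma mulT_nil (p : Tab) : mulT p [] = p := rfl

lemma foldl_nil_word {R : List ℕ} (hR : Pw R) (hne : R ≠ []) :
    R.foldl insertEntry [] = [R] := by
  cases R with
  | nil => simp at hne
  | cons x R =>
    have h1 : insertEntry [] x = [[x]] := rfl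
    rw [List.foldl_cons, h1, A0 [] (by simpa using hR)]
    simp

lemma KL {r : List ℕ} {rest : Tab} (h : IsTableau (r :: rest)) :
    r.foldl insertEntry rest = r :: rest := by
  induction rest generalizing r with
  | nil =>
    obtain ⟨hne, hch, -, -, -⟩ := isTableau_cons.1 h
    exact foldl_nil_word (List.isChain_iff_pairwise.1 hch) hne
  | cons s rest' ih =>
    obtain ⟨hne, hch, ht, hlen, hcol⟩ := isTableau_cons.1 h
    have hs : rowLen (s :: rest') 0 = s.length := by simp [rowLen]
    rw [KL' rest' (List.isChain_iff_pairwise.1 hch) (by rwa [hs] at hlen) ?_, ih ht]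
    intro j hj
    have := hcol j (by rwa [hs])
    simpa [entry] using this

lemma claimA {T : Tab} (h : IsTableau T) (a : ℕ) : mulT (T.drop a) (T.take a) = T := by
  induction a generalizing T with
  | zero => simp [mulT, wordOf]
  | succ a ih =>
    cases T with
    | nil => simp [mulT, wordOf]
    | cons r rest =>
      show mulT (rest.drop a) (r :: rest.take a) = r :: rest
      rw [mulT, wordOf_cons, List.foldl_append]
      have : List.foldl insertEntry (rest.drop a) (wordOf (rest.take a)) = rest :=
        ih (tab_tail h)
      rw [this]
      exact KL h

/-! ### getD helpers for tableaux -/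

lemma tgetD_take {T : Tab} {i a : ℕ} (h : i < a) : (T.take a).getD i [] = T.getD i [] := by
  simp [List.getD_eq_getElem?_getD, List.getElem?_take, h]

lemma tgetD_drop (T : Tab) (a i : ℕ) : (T.drop a).getD i [] = T.getD (a + i) [] := by
  simp [List.getD_eq_getElem?_getD, List.getElem?_drop]

lemma rowLen_pos_lt {T : Tab} {i : ℕ} (h : 0 < rowLen T i) : i < T.length := by
  by_contra hc
  push_neg at hc
  rw [rowLen, List.getD_eq_default _ _ (by omega)] at h
  simp at h

lemma rowlen_mono {T : Tab} (h : IsTableau T) (i : ℕ) : rowLen T (i+1) ≤ rowLen T i := by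
  induction T generalizing i with
  | nil => simp [rowLen]
  | cons r t ih =>
    obtain ⟨-, -, ht, hlen, -⟩ := isTableau_cons.1 h
    cases i with
    | zero => simpa [rowLen] using hlen
    | succ i => simpa [rowLen, List.getD_cons_succ] using ih ht i

lemma col_strict {T : Tab} (h : IsTableau T) {i j : ℕ} (hj : j < rowLen T (i+1)) :
    entry T i j < entry T (i+1) j := by
  have hi : i + 1 < T.length := rowLen_pos_lt (by omega)
  exact h.2.2 i j hi hj

/-! ### the three directions -/

lemma ii_cut : ∀ (Q : Tab) (T P : Tab), IsTableau T → IsTableau P → IsTableau Q →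
    mulT P Q = T → (∀ i < Q.length, rowLen T i = rowLen Q i) →
    P = T.drop Q.length ∧ Q = T.take Q.length := by
  intro Q
  induction Q with
  | nil =>
    intro T P hT hP hQ hPQ _
    have : P = T := hPQ
    simp [this]
  | cons R Q' ih =>
    intro T P hT hP hQ hPQ hrow
    obtain ⟨hRne, hRch, hQ', -, -⟩ := isTableau_cons.1 hQ
    have hsplit : mulT P (R :: Q') = R.foldl insertEntry (mulT P Q') := by
      rw [mulT, wordOf_cons, List.foldl_append]; rfl
    set P1 := mulT P Q' with hP1def
    have hP1 : IsTableau P1 := pres_foldl hP _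
    have hTP : T = R :: P1 := by
      rw [← hPQ, hsplit]
      cases hP1c : P1 with
      | nil => exact foldl_nil_word (List.isChain_iff_pairwise.1 hRch) hRne
      | cons s rest =>
        have h0 : rowLen (R.foldl insertEntry (s :: rest)) 0 = R.length := by
          rw [← hP1c, ← hsplit, hPQ]
          have := hrow 0 (by simp)
          simpa [rowLen] using this
        rw [hP1c] at hP1
        obtain ⟨-, hsch, -, -, -⟩ := isTableau_cons.1 hP1
        obtain ⟨hl, hpt⟩ := B'' rest (List.isChain_iff_pairwise.1 hRch)
          (List.isChain_iff_pairwise.1 hsch) h0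
        rw [KL' rest (List.isChain_iff_pairwise.1 hRch) hl hpt, KL hP1]
    have hrec := ih P1 P (by rw [hTP] at hT; exact tab_tail hT) hP hQ' rfl ?_
    · obtain ⟨h1, h2⟩ := hrec
      constructor
      · rw [hTP]; simpa using h1
      · rw [hTP]
        show R :: Q' = R :: P1.take Q'.length
        rw [← h2]
    · intro i hi
      have := hrow (i+1) (by simpa using hi)
      rw [hTP] at this
      simpa [rowLen, List.getD_cons_succ] using this

lemma tab_append : ∀ (Q P : Tab), IsTableau Q → IsTableau P → Q ≠ [] →
    rowLen P 0 ≤ rowLen Q (Q.length - 1) →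
    (∀ j < rowLen P 0, entry Q (Q.length - 1) j < entry P 0 j) →
    IsTableau (Q ++ P) := by
  intro Q
  induction Q with
  | nil => intro P _ _ h; simp at h
  | cons r Q' ih =>
    intro P hQ hP _ hlen hcol
    obtain ⟨hrne, hrch, hQ', hlen', hcol'⟩ := isTableau_cons.1 hQ
    cases Q' with
    | nil =>
      simp only [List.cons_append, List.nil_append]
      rw [isTableau_cons]
      refine ⟨hrne, hrch, hP, ?_, ?_⟩
      · simpa [rowLen] using hlen
      · intro j hj
        have := hcol j hj
        simpa [entry, rowLen] using this
    | cons s Q'' =>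
      simp only [List.cons_append]
      rw [isTableau_cons]
      refine ⟨hrne, hrch, ?_, ?_, ?_⟩
      · refine ih P hQ' hP (by simp) ?_ ?_
        · simpa [rowLen, List.getD_cons_succ] using hlen
        · intro j hj
          have := hcol j hj
          simpa [entry, List.getD_cons_succ] using this
      · simpa [rowLen] using hlen'
      · intro j hj
        have := hcol' j (by simpa [rowLen] using hj)
        simpa [entry, rowLen] using this

lemma cut_ii {T Q : Tab} {a : ℕ} (hQt : Q = T.take a) :
    ∀ i < a, rowLen T i = rowLen Q i := by
  intro i hi
  rw [hQt, rowLen, rowLen, tgetD_take hi]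

lemma cut_iii {T P Q : Tab} {a : ℕ} (hT : IsTableau T)
    (hPd : P = T.drop a) (hQt : Q = T.take a) :
    ∀ j < rowLen P 0, 0 < a → j < rowLen Q (a-1) ∧ entry Q (a-1) j < entry P 0 j := by
  intro j hj ha
  have hP0 : rowLen P 0 = rowLen T a := by
    rw [hPd, rowLen, rowLen, tgetD_drop]
    simp
  rw [hP0] at hj
  have hmono : rowLen T a ≤ rowLen T (a-1) := by
    have := rowlen_mono hT (a-1)
    have h1 : a - 1 + 1 = a := by omega
    rwa [h1] at this
  have hQlen : rowLen Q (a-1) = rowLen T (a-1) := by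
    rw [hQt, rowLen, rowLen, tgetD_take (by omega)]
  refine ⟨by omega, ?_⟩
  have hc : entry T (a-1) j < entry T a j := by
    have := col_strict hT (i := a-1) (j := j) (by rw [Nat.sub_add_cancel ha]; exact hj)
    rwa [Nat.sub_add_cancel ha] at this
  have h1 : entry Q (a-1) j = entry T (a-1) j := by
    rw [hQt, entry, entry, tgetD_take (by omega)]
  have h2 : entry P 0 j = entry T a j := by
    rw [hPd, entry, entry, tgetD_drop]
    simp
  omega

lemma iii_cut {T P Q : Tab} {a : ℕ} (hT : IsTableau T) (hP : IsTableau P) (hQ : IsTableau Q)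
    (hQa : Q.length = a) (hPQ : mulT P Q = T)
    (hiii : ∀ j < rowLen P 0, 0 < a → j < rowLen Q (a-1) ∧ entry Q (a-1) j < entry P 0 j) :
    P = T.drop a ∧ Q = T.take a := by
  rcases Nat.eq_zero_or_pos a with rfl | ha
  · have hQnil : Q = [] := List.length_eq_zero_iff.1 hQa
    subst hQnil
    have : P = T := hPQ
    simp [this]
  · cases hPc : P with
    | nil =>
      have hTQ : T = Q := by
        rw [← hPQ, hPc]
        have := claimA hQ Q.length
        simpa using this
      subst hTQ
      exact ⟨by simp [hPc, ← hQa], by simp [← hQa]⟩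
    | cons row P' =>
      have hrow : 0 < rowLen P 0 := by
        rw [hPc]
        obtain ⟨hne, -, -, -, -⟩ := isTableau_cons.1 (hPc ▸ hP)
        simpa [rowLen] using List.length_pos_iff.2 hne
      have hQne : Q ≠ [] := by
        intro hc; rw [hc] at hQa; simp at hQa; omega
      have happ : IsTableau (Q ++ P) := by
        refine tab_append Q P hQ hP hQne ?_ ?_
        · have := (hiii (rowLen P 0 - 1) (Nat.sub_lt hrow Nat.one_pos) ha).1
          rw [hQa]; omega
        · intro j hj
          rw [hQa]
          exact (hiii j hj ha).2
      have := claimA happ a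
      rw [← hQa, List.take_left, List.drop_left] at this
      have hTQP : T = Q ++ P := by rw [← hPQ]; exact this
      rw [hTQP, ← hQa, List.take_left, List.drop_left]
      exact ⟨hPc.symm, rfl⟩

end Dev

/-- Characterizations of the horizontal cut: for a factorization `T = P · Q` in
the plactic monoid with `Q` having `a` rows, the following are equivalent:
(i) `Q` is the top `a` rows of `T` and `P` the rest; (ii) the `i`-th row of `T`
has the same length as the `i`-th row of `Q` for `i < a`; (iii) whenever the top
row of `P` has a box in column `j`, the `a`-th row of `Q` has a strictly smaller
box in that column (vacuously, unless `a = 0`). -/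
theorem horizontal_cut_characterization (T P Q : Tab) (a : ℕ)
    (hT : IsTableau T) (hP : IsTableau P) (hQ : IsTableau Q)
    (hQa : Q.length = a) (hPQ : mulT P Q = T) :
    ((P = T.drop a ∧ Q = T.take a) ↔ (∀ i < a, rowLen T i = rowLen Q i)) ∧
    ((P = T.drop a ∧ Q = T.take a) ↔
      (∀ j < rowLen P 0, 0 < a → j < rowLen Q (a-1) ∧ entry Q (a-1) j < entry P 0 j)) := by
  constructor
  · constructor
    · rintro ⟨hPd, hQt⟩
      exact cut_ii hQt
    · intro h
      subst hQa
      exact ii_cut Q T P hT hP hQ hPQ h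
  · constructor
    · rintro ⟨hPd, hQt⟩
      exact cut_iii hT hPd hQt
    · intro h
      exact iii_cut hT hP hQ hQa hPQ h
end

section
/- If a row word R (weakly increasing sequence) of length q and a row word R′ of length p are multiplied in the plactic monoid, the product rect has at most two rows; if moreover the two-row diagram with R′ on top and R on bottom has a violation in the second row, then the second row of the product has at most q − 1 boxes, and there is exactly one way to factor the product into a single row of length p+1 times a single row of length q−1. -/
/-- The southwest order on violation positions: `(i,j)` is smaller than `(i',j')`
iff `j - i < j' - i'`, or `j - i = j' - i'` and `i < i'`. -/
def violLT (p q : ℕ × ℕ) : Prop :=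
  ((p.2 : ℤ) - p.1 < (q.2 : ℤ) - q.1) ∨ ((p.2 : ℤ) - p.1 = (q.2 : ℤ) - q.1 ∧ p.1 < q.1)

/-- `p` is the minimal violation of `D`. -/
def IsMinViol (D : Tab) (p : ℕ × ℕ) : Prop :=
  ViolAt D p.1 p.2 ∧ ∀ q, ViolAt D q.1 q.2 → q = p ∨ violLT p q

/-- An exchange operation between rows `i` and `i+1` of `D` (the second of which
contains a violation), producing `D'`. -/
def ExchangeStep (D : Tab) (i : ℕ) (D' : Tab) : Prop :=
  i + 1 < D.length ∧ (∃ j, ViolAt [D.getD i [], D.getD (i+1) []] 1 j) ∧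
  D'.length = D.length ∧ WeakRows D' ∧
  (∀ k, k ≠ i → k ≠ i + 1 → D'.getD k [] = D.getD k []) ∧
  rect [D'.getD i [], D'.getD (i+1) []] = rect [D.getD i [], D.getD (i+1) []] ∧
  SD [D'.getD i [], D'.getD (i+1) []] = - SD [D.getD i [], D.getD (i+1) []]

/-- `Q₀`: the part of `W` below row `a` and within the first `b` columns. -/
def Qzero (W : Tab) (a b : ℕ) : Tab :=
  ((W.drop a).map (fun r => r.take b)).filter (fun r => !r.isEmpty)

/-- `P₀`: the part of `W` in the top `a` rows to the right of column `b`. -/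
def Pzero (W : Tab) (a b : ℕ) : Tab :=
  ((W.take a).map (fun r => r.drop b)).filter (fun r => !r.isEmpty)

/-- `Z`: the part of `W` below row `a` and to the right of column `b`. -/
def Zpart (W : Tab) (a b : ℕ) : Tab :=
  ((W.drop a).map (fun r => r.drop b)).filter (fun r => !r.isEmpty)

/-- `T` is a rectangular tableau with `a` rows and `b` columns. -/
def IsRect (T : Tab) (a b : ℕ) : Prop :=
  IsTableau T ∧ T.length = a ∧ ∀ r ∈ T, r.length = b

/-- Every entry of `T` is strictly smaller than every entry of `X`. -/
def EntriesLT (T X : Tab) : Prop := ∀ rt ∈ T, ∀ t ∈ rt, ∀ rx ∈ X, ∀ x ∈ rx, t < x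

/-- `W` contains the rectangular tableau `T` (with `a` rows, `b` columns)
in its upper-left corner. -/
def ContainsUL (W T : Tab) (a b : ℕ) : Prop :=
  ∀ i < a, (W.getD i []).take b = T.getD i []

/-- All entries of `W` outside the upper-left `a × b` rectangle are strictly
larger than every entry of `T`. -/
def OuterEntriesGT (W T : Tab) (a b : ℕ) : Prop :=
  ∀ i j, j < rowLen W i → ¬ (i < a ∧ j < b) → ∀ rt ∈ T, ∀ t ∈ rt, t < entry W i j

/-- A simple factorization `W = Q · T · P` with respect to the `a × b` rectangle:
`Q = Q₀ · Z₁` and `P = Z₂ · P₀` for some plactic factorization `Z = Z₁ · Z₂`. -/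
def SimpleFact (W T : Tab) (a b : ℕ) (Q P : Tab) : Prop :=
  ∃ Z1 Z2 : Tab, IsTableau Z1 ∧ IsTableau Z2 ∧ mulT Z1 Z2 = Zpart W a b ∧
    Q = mulT (Qzero W a b) Z1 ∧ P = mulT Z2 (Pzero W a b)

/-- The elementary move `(X, Y) ⊨ (X', Y')` with respect to an `a × b` rectangle:
either a factor of the part of `X` right of column `b` moves to the front of `Y`,
or a factor of the part of `Y` below row `a` moves to the end of `X`. -/
def RelTab (a b : ℕ) (x y : Tab × Tab) : Prop :=
  (∃ M N, IsTableau M ∧ IsTableau N ∧ mulT M N = rightCols x.1 b ∧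
     y.1 = mulT (leftCols x.1 b) M ∧ y.2 = mulT N x.2) ∨
  (∃ M N, IsTableau M ∧ IsTableau N ∧ mulT M N = x.2.drop a ∧
     y.1 = mulT x.1 M ∧ y.2 = mulT N (x.2.take a))

/-- `S(P over Q)`: the Schur function of the sequence consisting of the row lengths
of `P` padded to length `a` by zeros, followed by the row lengths of `Q`. -/
noncomputable def SPQ (a : ℕ) (Q P : Tab) : SymFn :=
  schur ((List.range a).map (fun i => (rowLen P i : ℤ)) ++ Q.map (fun r => (r.length : ℤ)))

/-- `P` and `Q` fit together as a tableau with `P` in the top `a` rows and `Q` below. -/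
def FitsOver (a : ℕ) (Q P : Tab) : Prop :=
  ∀ j < rowLen Q 0, j < rowLen P (a-1) ∧ entry P (a-1) j < entry Q 0 j

/-- Membership in the set `𝒫ₐ` of pairs `(Q, P)`. -/
def MemPa (a : ℕ) (x : Tab × Tab) : Prop :=
  IsTableau x.1 ∧ IsTableau x.2 ∧ x.2.length ≤ a ∧ SPQ a x.1 x.2 ≠ 0 ∧ ¬ FitsOver a x.1 x.2

/-- The first column of a tableau. -/
def firstCol (t : Tab) : List ℕ := t.map (fun r => r.headD 0)

/-- The diagram with `T · Y` (as juxtaposition) in the top `a` rows and `X` below. -/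
def xtyDiag (T : Tab) (a : ℕ) (X Y : Tab) : Tab :=
  (List.range a).map (fun i => T.getD i [] ++ Y.getD i []) ++ X

def shapeOf (t : Tab) : List ℕ := t.map List.length

/-- A partition, as a weakly decreasing list of positive integers. -/
def IsPartitionL (l : List ℕ) : Prop := List.Chain' (· ≥ ·) l ∧ ∀ x ∈ l, 0 < x

/-! ### Auxiliary development for `row_times_row` -/

namespace RowRowAux

open List

/-- One insertion step on a (row1, row2) state. -/
def step (s : List ℕ × List ℕ) (x : ℕ) : List ℕ × List ℕ :=
  match rowInsert s.1 x with
  | (A, none) => (A, s.2)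
  | (A, some y) => (A, s.2 ++ [y])

/-- Simulate insertion of a word into a two-row state. -/
def sim (s : List ℕ × List ℕ) (w : List ℕ) : List ℕ × List ℕ := w.foldl step s

/-- Turn a two-row state into an honest `Tab`. -/
def toTab (s : List ℕ × List ℕ) : Tab :=
  if s.1 = [] then [] else if s.2 = [] then [s.1] else [s.1, s.2]

@[simp] lemma sim_nil (s : List ℕ × List ℕ) : sim s [] = s := rfl

lemma sim_cons (s : List ℕ × List ℕ) (x : ℕ) (w : List ℕ) :
    sim s (x :: w) = sim (step s x) w := rfl

lemma sim_append (s : List ℕ × List ℕ) (w1 w2 : List ℕ) :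
    sim s (w1 ++ w2) = sim (sim s w1) w2 := by
  simp [sim, List.foldl_append]

lemma rowInsert_none_of (A : List ℕ) (x : ℕ) (h : ∀ a ∈ A, a ≤ x) :
    rowInsert A x = (A ++ [x], none) := by
  induction A with
  | nil => rfl
  | cons a A ih =>
    have ha : a ≤ x := h a (by simp)
    simp only [rowInsert, if_pos ha, ih (fun b hb => h b (by simp [hb]))]
    simp

lemma rowInsert_some_of (T Q : List ℕ) (x y : ℕ) (hT : ∀ a ∈ T, a ≤ x) (hy : x < y) :
    rowInsert (T ++ y :: Q) x = (T ++ x :: Q, some y) := by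
  induction T with
  | nil => simp [rowInsert, Nat.not_le.mpr hy]
  | cons t T ih =>
    have ht : t ≤ x := hT t (by simp)
    simp only [cons_append, rowInsert, if_pos ht]
    rw [ih (fun b hb => hT b (by simp [hb]))]

lemma rowInsert_cases (A : List ℕ) (x : ℕ) :
    (rowInsert A x = (A ++ [x], none) ∧ ∀ a ∈ A, a ≤ x) ∨
    (∃ T y Q, A = T ++ y :: Q ∧ rowInsert A x = (T ++ x :: Q, some y) ∧
      (∀ a ∈ T, a ≤ x) ∧ x < y) := by
  induction A with
  | nil => exact Or.inl ⟨rfl, by simp⟩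
  | cons a A ih =>
    by_cases ha : a ≤ x
    · rcases ih with ⟨heq, hle⟩ | ⟨T, y, Q, hA, heq, hT, hxy⟩
      · refine Or.inl ⟨?_, ?_⟩
        · simp only [rowInsert, if_pos ha, heq]; simp
        · intro b hb; rcases mem_cons.mp hb with rfl | hb
          · exact ha
          · exact hle b hb
      · refine Or.inr ⟨a :: T, y, Q, by simp [hA], ?_, ?_, hxy⟩
        · simp only [rowInsert, if_pos ha, heq]; simp
        · intro b hb; rcases mem_cons.mp hb with rfl | hb
          · exact ha
          · exact hT b hb
    · exact Or.inr ⟨[], a, A, by simp, by simp [rowInsert, ha], by simp, Nat.lt_of_not_le ha⟩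

lemma step_fst_len (s : List ℕ × List ℕ) (x : ℕ) : s.1.length ≤ (step s x).1.length := by
  rcases rowInsert_cases s.1 x with ⟨heq, -⟩ | ⟨T, y, Q, hA, heq, -, -⟩
  · simp only [step, heq]; simp
  · simp only [step, heq]; simp [hA]

lemma step_len (s : List ℕ × List ℕ) (x : ℕ) :
    (step s x).1.length + (step s x).2.length = s.1.length + s.2.length + 1 := by
  rcases rowInsert_cases s.1 x with ⟨heq, -⟩ | ⟨T, y, Q, hA, heq, -, -⟩
  · simp only [step, heq]; simp; omega
  · simp only [step, heq]; simp [hA]; omega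

lemma sim_fst_len (w : List ℕ) : ∀ s : List ℕ × List ℕ, s.1.length ≤ (sim s w).1.length := by
  induction w with
  | nil => simp
  | cons x w ih =>
    intro s
    rw [sim_cons]
    exact le_trans (step_fst_len s x) (ih (step s x))

lemma sim_len (w : List ℕ) : ∀ s : List ℕ × List ℕ,
    (sim s w).1.length + (sim s w).2.length = s.1.length + s.2.length + w.length := by
  induction w with
  | nil => simp
  | cons x w ih =>
    intro s
    rw [sim_cons, ih (step s x), step_len]
    simp; omega

lemma sim_snd_len (w : List ℕ) (s : List ℕ × List ℕ) :
    (sim s w).2.length ≤ s.2.length + w.length := by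
  have h1 := sim_len w s
  have h2 := sim_fst_len w s
  omega

lemma sim_all_append (w : List ℕ) : ∀ s : List ℕ × List ℕ, Pairwise (· ≤ ·) w →
    (∀ a ∈ s.1, ∀ z ∈ w, a ≤ z) → sim s w = (s.1 ++ w, s.2) := by
  induction w with
  | nil => simp
  | cons x w ih =>
    intro s hw h
    have hstep : step s x = (s.1 ++ [x], s.2) := by
      simp [step, rowInsert_none_of s.1 x (fun a ha => h a ha x (by simp))]
    rw [sim_cons, hstep, ih (s.1 ++ [x], s.2) hw.of_cons ?_]
    · simp
    · intro a ha z hz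
      rcases mem_append.mp ha with h1 | h1
      · exact h a h1 z (by simp [hz])
      · simp only [mem_singleton] at h1; subst h1
        exact (pairwise_cons.mp hw).1 z hz

lemma sim_split (w : List ℕ) : ∀ s : List ℕ × List ℕ, Pairwise (· ≤ ·) w →
    ∃ w1 w2, w = w1 ++ w2 ∧ (sim s w1).1.length = s.1.length ∧
      sim s w = ((sim s w1).1 ++ w2, (sim s w1).2) ∧
      (∀ a ∈ (sim s w1).1, ∀ z ∈ w2, a ≤ z) := by
  induction w with
  | nil => exact fun s _ => ⟨[], [], by simp, by simp, by simp, by simp⟩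
  | cons x w ih =>
    intro s hw
    rcases rowInsert_cases s.1 x with ⟨heq, hle⟩ | ⟨T, y, Q, hA, heq, hT, hxy⟩
    · have hall : ∀ a ∈ s.1, ∀ z ∈ x :: w, a ≤ z := by
        intro a ha z hz
        rcases mem_cons.mp hz with rfl | hz
        · exact hle a ha
        · exact le_trans (hle a ha) ((pairwise_cons.mp hw).1 z hz)
      exact ⟨[], x :: w, rfl, by simp, by rw [sim_all_append _ s hw hall]; simp, by simpa using hall⟩
    · have hstep : step s x = (T ++ x :: Q, s.2 ++ [y]) := by simp [step, heq]
      obtain ⟨w1, w2, hsplit, hlen, hsim, hle2⟩ := ih (step s x) hw.of_cons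
      refine ⟨x :: w1, w2, by simp [hsplit], ?_, ?_, ?_⟩
      · rw [sim_cons, hlen, hstep, hA]; simp
      · rw [sim_cons, hsim, sim_cons]
      · rw [sim_cons]; exact hle2

lemma getD_middle (T Q : List ℕ) (x : ℕ) (i : ℕ) :
    (T ++ x :: Q).getD i 0 =
      if i < T.length then T.getD i 0
      else if i = T.length then x else Q.getD (i - T.length - 1) 0 := by
  split_ifs with h1 h2
  · exact getD_append T (x :: Q) 0 i h1
  · subst h2
    rw [getD_append_right T (x :: Q) 0 T.length (le_refl _)]
    simp
  · have hle : T.length ≤ i := Nat.le_of_not_lt h1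
    obtain ⟨k, rfl⟩ := Nat.exists_eq_add_of_le hle
    rw [getD_append_right T (x :: Q) 0 _ hle]
    have hk : T.length + k - T.length = k := by omega
    rw [hk]
    cases k with
    | zero => exact absurd (Nat.add_zero _) h2
    | succ k =>
      rw [getD_cons_succ]
      simp

lemma getD_mem (l : List ℕ) (i : ℕ) (h : i < l.length) : l.getD i 0 ∈ l := by
  rw [getD_eq_getElem l 0 h]
  exact List.getElem_mem _

lemma pairwise_getD_mono {l : List ℕ} (h : Pairwise (· ≤ ·) l) {i j : ℕ}
    (hij : i ≤ j) (hj : j < l.length) : l.getD i 0 ≤ l.getD j 0 := by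
  rcases Nat.eq_or_lt_of_le hij with rfl | hlt
  · exact le_refl _
  · rw [getD_eq_getElem l 0 (lt_trans hlt hj), getD_eq_getElem l 0 hj]
    exact List.pairwise_iff_getElem.mp h i j (lt_trans hlt hj) hj hlt

lemma sim_snd_le (w : List ℕ) : ∀ (s : List ℕ × List ℕ) (c : ℕ), Pairwise (· ≤ ·) w →
    (∀ x ∈ w, ∀ a ∈ s.1.take c, a ≤ x) →
    (sim s w).2.length ≤ s.2.length + (s.1.length - c) := by
  induction w with
  | nil => intro s c _ _; simp
  | cons x w ih =>
    intro s c hw h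
    rcases rowInsert_cases s.1 x with ⟨heq, hle⟩ | ⟨T, y, Q, hA, heq, hT, hxy⟩
    · have hall : ∀ a ∈ s.1, ∀ z ∈ x :: w, a ≤ z := by
        intro a ha z hz
        rcases mem_cons.mp hz with rfl | hz
        · exact hle a ha
        · exact le_trans (hle a ha) ((pairwise_cons.mp hw).1 z hz)
      rw [sim_all_append _ s hw hall]
      simp
    · have hcT : c ≤ T.length := by
        by_contra hc
        push_neg at hc
        have hyy : y ∈ s.1.take c := by
          rw [hA]
          have h1 : c = T.length + (c - T.length) := by omega
          rw [h1, take_append]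
          have h2 : c - T.length = (c - T.length - 1) + 1 := by omega
          rw [h2]
          simp
        have := h x (by simp) y hyy
        omega
      have hstep : step s x = (T ++ x :: Q, s.2 ++ [y]) := by simp [step, heq]
      have hrec := ih (step s x) (T.length + 1) hw.of_cons ?_
      · rw [sim_cons, hstep]
        rw [hstep] at hrec
        simp only [length_append, length_cons, length_nil] at hrec
        rw [hA]
        simp only [length_append, length_cons]
        omega
      · intro z hz a ha
        rw [hstep] at ha
        simp only at ha
        have htake : (T ++ x :: Q).take (T.length + 1) = T ++ [x] := by
          have h1 : T.length + 1 = T.length + 1 := rfl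
          rw [take_append]
          simp
        rw [htake] at ha
        have hax : a ≤ x := by
          rcases mem_append.mp ha with h1 | h1
          · exact hT a h1
          · simp only [mem_singleton] at h1; subst h1; exact le_refl _
        exact le_trans hax ((pairwise_cons.mp hw).1 z hz)

lemma sim_fst_getD_le (w : List ℕ) : ∀ (s : List ℕ × List ℕ) (i : ℕ), i < s.1.length →
    (sim s w).1.getD i 0 ≤ s.1.getD i 0 := by
  induction w with
  | nil => intro s i _; simp
  | cons x w ih =>
    intro s i hi
    rw [sim_cons]
    rcases rowInsert_cases s.1 x with ⟨heq, hle⟩ | ⟨T, y, Q, hA, heq, hT, hxy⟩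
    · have hstep : step s x = (s.1 ++ [x], s.2) := by simp [step, heq]
      rw [hstep]
      calc (sim (s.1 ++ [x], s.2) w).1.getD i 0 ≤ (s.1 ++ [x]).getD i 0 := by
            apply ih (s.1 ++ [x], s.2) i
            simp; omega
        _ = s.1.getD i 0 := getD_append _ _ _ _ hi
    · have hstep : step s x = (T ++ x :: Q, s.2 ++ [y]) := by simp [step, heq]
      rw [hstep]
      have hlen : (T ++ x :: Q).length = s.1.length := by rw [hA]; simp
      calc (sim (T ++ x :: Q, s.2 ++ [y]) w).1.getD i 0 ≤ (T ++ x :: Q).getD i 0 := by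
            apply ih (T ++ x :: Q, s.2 ++ [y]) i
            simpa [hlen] using hi
        _ ≤ s.1.getD i 0 := by
            rw [hA, getD_middle, getD_middle]
            split_ifs with h1 h2
            · exact le_refl _
            · exact le_of_lt hxy
            · exact le_refl _

lemma insert_toTab (s : List ℕ × List ℕ) (x : ℕ)
    (h0 : s.1 = [] → s.2 = [])
    (h3 : ∀ b ∈ s.2, ∀ a ∈ s.1, x < a → b ≤ a) :
    insertEntry (toTab s) x = toTab (step s x) := by
  rcases eq_or_ne s.1 [] with h1 | h1
  · have h2 := h0 h1
    rw [toTab, if_pos h1]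
    have hstep : step s x = ([x], s.2) := by simp [step, h1, rowInsert]
    rw [hstep, toTab]
    simp [h2, insertEntry]
  · rcases rowInsert_cases s.1 x with ⟨heq, hle⟩ | ⟨T, y, Q, hA, heq, hT, hxy⟩
    · have hstep : step s x = (s.1 ++ [x], s.2) := by simp [step, heq]
      rcases eq_or_ne s.2 [] with h2 | h2
      · rw [toTab, if_neg h1, if_pos h2, hstep, toTab]
        simp [insertEntry, heq, h2]
      · rw [toTab, if_neg h1, if_neg h2, hstep, toTab]
        simp [insertEntry, heq, h2]
    · have hstep : step s x = (T ++ x :: Q, s.2 ++ [y]) := by simp [step, heq]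
      have hy : y ∈ s.1 := by rw [hA]; exact mem_append.mpr (Or.inr (by simp))
      have hby : ∀ b ∈ s.2, b ≤ y := fun b hb => h3 b hb y hy hxy
      rcases eq_or_ne s.2 [] with h2 | h2
      · rw [toTab, if_neg h1, if_pos h2, hstep, toTab]
        simp [insertEntry, heq, h2]
      · rw [toTab, if_neg h1, if_neg h2, hstep, toTab]
        simp [insertEntry, heq, rowInsert_none_of s.2 y hby, h2]

lemma fwd (w : List ℕ) : ∀ s : List ℕ × List ℕ, Pairwise (· ≤ ·) w →
    Pairwise (· ≤ ·) s.1 → Pairwise (· ≤ ·) s.2 →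
    s.2.length ≤ s.1.length →
    (∀ x ∈ w, ∀ i, i < s.2.length → s.1.getD i 0 ≤ x) →
    (∀ i, i < s.2.length → s.1.getD i 0 < s.2.getD i 0) →
    (∀ x ∈ w, ∀ b ∈ s.2, ∀ a ∈ s.1, x < a → b ≤ a) →
    (s.1 = [] → s.2 = []) →
    Pairwise (· ≤ ·) (sim s w).1 ∧ Pairwise (· ≤ ·) (sim s w).2 ∧
      (sim s w).2.length ≤ (sim s w).1.length ∧
      (∀ i, i < (sim s w).2.length → (sim s w).1.getD i 0 < (sim s w).2.getD i 0) ∧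
      ((sim s w).1 = [] → (sim s w).2 = []) ∧
      List.foldl insertEntry (toTab s) w = toTab (sim s w) := by
  induction w with
  | nil =>
    intro s _ h1 h2 h4 _ hcol h3 h0
    exact ⟨h1, h2, h4, hcol, h0, rfl⟩
  | cons x w ih =>
    intro s hw hA hB h4 hH1 hH2 hH3 h0
    have hwx : ∀ z ∈ w, x ≤ z := (pairwise_cons.mp hw).1
    have hcorr : insertEntry (toTab s) x = toTab (step s x) :=
      insert_toTab s x h0 (fun b hb a ha h => hH3 x (by simp) b hb a ha h)
    rw [sim_cons, foldl_cons, hcorr]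
    rcases rowInsert_cases s.1 x with ⟨heq, hle⟩ | ⟨T, y, Q, hA', heq, hT, hxy⟩
    · have hstep : step s x = (s.1 ++ [x], s.2) := by simp [step, heq]
      rw [hstep]
      refine ih (s.1 ++ [x], s.2) hw.of_cons ?_ hB ?_ ?_ ?_ ?_ ?_
      · rw [pairwise_append]
        refine ⟨hA, pairwise_singleton _ _, fun a ha z hz => ?_⟩
        simp only [mem_singleton] at hz; subst hz; exact hle a ha
      · simp only [length_append, length_cons, length_nil]; omega
      · intro z hz i hi
        simp only at hi ⊢
        rw [getD_append _ _ _ _ (lt_of_lt_of_le hi h4)]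
        exact le_trans (hH1 x (by simp) i hi) (hwx z hz)
      · intro i hi
        simp only at hi ⊢
        rw [getD_append _ _ _ _ (lt_of_lt_of_le hi h4)]
        exact hH2 i hi
      · intro z hz b hb a ha hlt
        simp only at hb ha
        rcases mem_append.mp ha with ha | ha
        · exact hH3 z (by simp [hz]) b hb a ha hlt
        · simp only [mem_singleton] at ha; subst ha
          exact absurd hlt (not_lt.mpr (hwx z hz))
      · intro h; simp at h
    · have hstep : step s x = (T ++ x :: Q, s.2 ++ [y]) := by simp [step, heq]
      rw [hstep]
      have hBT : s.2.length ≤ T.length := by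
        by_contra hc
        push_neg at hc
        have h5 := hH1 x (by simp) T.length hc
        rw [hA', getD_middle] at h5
        simp at h5
        omega
      have hAsplit := hA
      rw [hA', pairwise_append] at hAsplit
      have hyQ : ∀ z ∈ Q, y ≤ z := fun z hz => (pairwise_cons.mp hAsplit.2.1).1 z hz
      have hTy : ∀ a ∈ T, ∀ z ∈ y :: Q, a ≤ z := hAsplit.2.2
      have hby : ∀ b ∈ s.2, b ≤ y :=
        fun b hb => hH3 x (by simp) b hb y (by rw [hA']; simp) hxy
      refine ih (T ++ x :: Q, s.2 ++ [y]) hw.of_cons ?_ ?_ ?_ ?_ ?_ ?_ ?_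
      · rw [pairwise_append]
        refine ⟨hAsplit.1, ?_, ?_⟩
        · rw [pairwise_cons]
          exact ⟨fun z hz => le_trans (le_of_lt hxy) (hyQ z hz), hAsplit.2.1.of_cons⟩
        · intro a ha z hz
          rcases mem_cons.mp hz with rfl | hz
          · exact hT a ha
          · exact hTy a ha z (by simp [hz])
      · rw [pairwise_append]
        refine ⟨hB, pairwise_singleton _ _, fun b hb z hz => ?_⟩
        simp only [mem_singleton] at hz; subst hz; exact hby b hb
      · simp only [length_append, length_cons, length_nil]; omega
      · intro z hz i hi
        simp only [length_append, length_cons, length_nil] at hi ⊢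
        rw [getD_middle]
        split_ifs with hi1 hi2
        · exact le_trans (hT _ (getD_mem T i hi1)) (hwx z hz)
        · exact hwx z hz
        · omega
      · intro i hi
        simp only [length_append, length_cons, length_nil] at hi ⊢
        by_cases his : i < s.2.length
        · rw [getD_append _ _ _ _ his, getD_middle]
          have hiT : i < T.length := lt_of_lt_of_le his hBT
          rw [if_pos hiT]
          have h6 := hH2 i his
          rwa [hA', getD_middle, if_pos hiT] at h6
        · have hieq : i = s.2.length := by omega
          subst hieq
          rw [getD_append_right _ _ _ _ (le_refl _)]
          simp only [Nat.sub_self, getD_cons_zero]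
          rw [getD_middle]
          split_ifs with hi1 hi2
          · exact lt_of_le_of_lt (hT _ (getD_mem T _ hi1)) hxy
          · exact hxy
          · omega
      · intro z hz b hb a ha hlt
        simp only at hb ha
        rcases mem_append.mp ha with haT | haxQ
        · exact absurd hlt (not_lt.mpr (le_trans (hT a haT) (hwx z hz)))
        · rcases mem_cons.mp haxQ with rfl | haQ
          · exact absurd hlt (not_lt.mpr (hwx z hz))
          · rcases mem_append.mp hb with hb | hb
            · exact le_trans (hby b hb) (hyQ a haQ)
            · simp only [mem_singleton] at hb; subst hb
              exact hyQ a haQ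
      · intro h; simp at h

lemma bump_key {T Q T' Q' : List ℕ} {x x' y : ℕ}
    (hA' : Pairwise (· ≤ ·) (T' ++ y :: Q'))
    (hC : T ++ x :: Q = T' ++ x' :: Q') (hx : x < y) (hx' : x' < y) :
    ¬ T'.length < T.length := by
  intro hlt
  have hlen : T.length < (T' ++ x' :: Q').length := by
    rw [← hC]; simp only [length_append, length_cons]; omega
  have h1 : (T ++ x :: Q).getD T.length 0 = x := by
    rw [getD_middle]; simp
  rw [hC, getD_middle] at h1
  split_ifs at h1 with g1 g2
  · omega
  · omega
  · have hidx : T.length - T'.length - 1 < Q'.length := by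
      simp only [length_append, length_cons] at hlen; omega
    have hmem : Q'.getD (T.length - T'.length - 1) 0 ∈ Q' := getD_mem _ _ hidx
    have hyq : ∀ z ∈ Q', y ≤ z := by
      rw [pairwise_append] at hA'
      exact fun z hz => (pairwise_cons.mp hA'.2.1).1 z hz
    have := hyq _ hmem
    omega

lemma bump_inj {A A' C : List ℕ} {x x' y : ℕ}
    (hA : Pairwise (· ≤ ·) A) (hA' : Pairwise (· ≤ ·) A')
    (h1 : rowInsert A x = (C, some y)) (h2 : rowInsert A' x' = (C, some y)) :
    A = A' ∧ x = x' := by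
  rcases rowInsert_cases A x with ⟨heq, -⟩ | ⟨T, y1, Q, hd, heq, hT, hxy⟩
  · rw [heq] at h1; simp at h1
  rcases rowInsert_cases A' x' with ⟨heq', -⟩ | ⟨T', y1', Q', hd', heq', hT', hxy'⟩
  · rw [heq'] at h2; simp at h2
  rw [heq] at h1
  rw [heq'] at h2
  have hC1 : T ++ x :: Q = C := congrArg Prod.fst h1
  have hy1 : y1 = y := by
    have := congrArg Prod.snd h1; simpa using this
  have hC2 : T' ++ x' :: Q' = C := congrArg Prod.fst h2
  have hy1' : y1' = y := by
    have := congrArg Prod.snd h2; simpa using this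
  have hC : T ++ x :: Q = T' ++ x' :: Q' := hC1.trans hC2.symm
  have hyy : y1' = y1 := hy1'.trans hy1.symm
  have hApw : List.Pairwise (· ≤ ·) (T ++ y1 :: Q) := hd ▸ hA
  have hApw' : List.Pairwise (· ≤ ·) (T' ++ y1 :: Q') := by
    rw [← hyy]; exact hd' ▸ hA'
  have hxy2 : x' < y1 := hyy ▸ hxy'
  have k1 := bump_key hApw' hC hxy hxy2
  have k2 := bump_key hApw hC.symm hxy2 hxy
  have hlen : T.length = T'.length := by omega
  obtain ⟨hTeq, hrest⟩ := append_inj hC hlen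
  have hx : x = x' := by injection hrest with h _
  have hQ : Q = Q' := by injection hrest with _ h
  constructor
  · rw [hd, hd', hTeq, hQ, ← hyy]
  · exact hx

lemma toTab_inj {s t : List ℕ × List ℕ} (hs : s.1 ≠ []) (ht : t.1 ≠ [])
    (h : toTab s = toTab t) : s = t := by
  rw [toTab, toTab, if_neg hs, if_neg ht] at h
  rcases eq_or_ne s.2 [] with h2 | h2 <;> rcases eq_or_ne t.2 [] with h3 | h3
  · rw [if_pos h2, if_pos h3] at h
    injection h with h _
    exact Prod.ext_iff.mpr ⟨h, h2.trans h3.symm⟩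
  · rw [if_pos h2, if_neg h3] at h; simp at h
  · rw [if_neg h2, if_pos h3] at h; simp at h
  · rw [if_neg h2, if_neg h3] at h
    injection h with ha hb
    injection hb with hb _
    exact Prod.ext_iff.mpr ⟨ha, hb⟩

lemma length_takeWhile_ge (p : ℕ → Bool) : ∀ (A : List ℕ) (c : ℕ), c ≤ A.length →
    (∀ i, i < c → p (A.getD i 0)) → c ≤ (A.takeWhile p).length := by
  intro A
  induction A with
  | nil => intro c hc _; simpa using hc
  | cons a A ihA =>
    intro c hc h
    cases c with
    | zero => simp
    | succ c =>
      have h0 : p a := by simpa using h 0 (Nat.succ_pos c)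
      rw [takeWhile_cons, if_pos h0]
      simp only [length_cons]
      have := ihA c (by simpa using hc) (fun i hi => by
        have := h (i + 1) (by omega)
        rwa [getD_cons_succ] at this)
      omega

lemma dropWhile_ge (A : List ℕ) (y : ℕ) (hA : Pairwise (· ≤ ·) A) :
    ∀ z ∈ A.dropWhile (fun a => decide (a < y)), y ≤ z := by
  induction A with
  | nil => simp
  | cons a A ih =>
    by_cases h : a < y
    · rw [dropWhile_cons, if_pos (by simpa using h)]
      exact ih hA.of_cons
    · rw [dropWhile_cons, if_neg (by simpa using h)]
      intro z hz
      rcases mem_cons.mp hz with rfl | hz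
      · exact Nat.le_of_not_lt h
      · exact le_trans (Nat.le_of_not_lt h) ((pairwise_cons.mp hA).1 z hz)

lemma exists_fact (a : ℕ) : ∀ (b : ℕ) (A B : List ℕ),
    Pairwise (· ≤ ·) A → Pairwise (· ≤ ·) B →
    (∀ i, i < B.length → A.getD i 0 < B.getD i 0) →
    B.length ≤ a → a ≤ A.length → A.length + B.length = a + b →
    ∃ u v : List ℕ, Pairwise (· ≤ ·) u ∧ Pairwise (· ≤ ·) v ∧
      u.length = a ∧ v.length = b ∧ sim (u, []) v = (A, B) ∧
      (∀ t z, v = t ++ [z] → ∃ k, k < A.length ∧ A.getD k 0 = z) ∧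
      (v.length = B.length → ∀ t z, v = t ++ [z] → ∀ r q, B = r ++ [q] → z < q) := by
  intro b
  induction b with
  | zero =>
    intro A B hA hB _ hBa haA hsum
    have hB0 : B = [] := by
      have : B.length = 0 := by omega
      exact length_eq_zero_iff.mp this
    subst hB0
    refine ⟨A, [], hA, Pairwise.nil, by omega, rfl, rfl, ?_, ?_⟩
    · intro t z h; simp at h
    · intro _ t z h; simp at h
  | succ b ih =>
    intro A B hA hB hcol hBa haA hsum
    by_cases hlen : a < A.length
    · -- last letter was appended
      rcases A.eq_nil_or_concat' with rfl | ⟨A₀, x, rfl⟩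
      · simp at hlen
      have hApair := pairwise_append.mp hA
      have hxtop : ∀ z ∈ A₀, z ≤ x := fun z hz => hApair.2.2 z hz x (by simp)
      have hA₀ : Pairwise (· ≤ ·) A₀ := hApair.1
      have hA₀len : (A₀ ++ [x]).length = A₀.length + 1 := by simp
      have hcol₀ : ∀ i, i < B.length → A₀.getD i 0 < B.getD i 0 := by
        intro i hi
        have hiA : i < A₀.length := by
          simp only [length_append, length_cons, length_nil] at hsum
          omega
        rw [← getD_append A₀ [x] 0 i hiA]
        exact hcol i hi
      have hle1 : a ≤ A₀.length := by
        simp only [length_append, length_cons, length_nil] at hlen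
        omega
      have hsum0 : A₀.length + B.length = a + b := by
        simp only [length_append, length_cons, length_nil] at hsum hlen
        omega
      obtain ⟨u, v₀, hu, hv₀, hul, hv₀l, hsim₀, hX1, _⟩ := ih A₀ B hA₀ hB hcol₀ hBa hle1 hsum0
      refine ⟨u, v₀ ++ [x], hu, ?_, hul, by simp [hv₀l], ?_, ?_, ?_⟩
      · -- Pairwise (v₀ ++ [x])
        rw [pairwise_append]
        refine ⟨hv₀, pairwise_singleton _ _, ?_⟩
        intro z hz w hw
        rw [mem_singleton] at hw
        rw [hw]
        rcases v₀.eq_nil_or_concat' with rfl | ⟨t, zl, hteq⟩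
        · simp at hz
        · obtain ⟨k, hk, hkz⟩ := hX1 t zl hteq
          have hzl : zl ≤ x := by rw [← hkz]; exact hxtop _ (getD_mem _ _ hk)
          rw [hteq] at hz hv₀
          rcases mem_append.mp hz with hz | hz
          · exact le_trans ((pairwise_append.mp hv₀).2.2 z hz zl (by simp)) hzl
          · simp only [mem_singleton] at hz; subst hz; exact hzl
      · rw [sim_append, hsim₀]
        show step (A₀, B) x = _
        simp [step, rowInsert_none_of A₀ x hxtop]
      · intro t z h
        obtain ⟨ht1, ht2⟩ := append_inj' h rfl
        injection ht2 with hz _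
        refine ⟨A₀.length, by simp, ?_⟩
        rw [getD_append_right _ _ _ _ (le_refl _)]
        simp [hz]
      · intro hl
        exfalso
        simp only [length_append, length_cons, length_nil, hv₀l] at hl
        simp only [length_append, length_cons, length_nil] at hsum hBa
        omega
    · -- last letter was bumped
      have haA' : A.length = a := by omega
      have hBlen : B.length = b + 1 := by omega
      have hBne : B ≠ [] := by intro h; rw [h] at hBlen; simp at hBlen
      obtain ⟨B₀, y, rfl⟩ := B.eq_nil_or_concat'.resolve_left hBne
      have hBpair := pairwise_append.mp hB
      have hB₀y : ∀ q ∈ B₀, q ≤ y := fun q hq => hBpair.2.2 q hq y (by simp)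
      have hyB : ∀ i, i < B₀.length + 1 → A.getD i 0 < y := by
        intro i hi
        have h1 := hcol i (by simpa using hi)
        have h2 : (B₀ ++ [y]).getD i 0 ≤ y := by
          by_cases hiB : i < B₀.length
          · rw [getD_append _ _ _ _ hiB]
            exact hB₀y _ (getD_mem _ _ hiB)
          · have : i = B₀.length := by omega
            subst this
            rw [getD_append_right _ _ _ _ (le_refl _)]
            simp
        omega
      have hPlen : B₀.length + 1 ≤ (A.takeWhile (fun z => decide (z < y))).length := by
        apply length_takeWhile_ge _ A _ ?_ ?_
        · simp only [length_append, length_cons, length_nil] at hBa; omega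
        · intro i hi
          simpa using hyB i hi
      set P := A.takeWhile (fun z => decide (z < y)) with hPdef
      set Dp := A.dropWhile (fun z => decide (z < y)) with hDpdef
      have hPD : P ++ Dp = A := takeWhile_append_dropWhile
      have hPne : P ≠ [] := by intro h; rw [h] at hPlen; simp at hPlen
      obtain ⟨Pd, x, hPdec⟩ := P.eq_nil_or_concat'.resolve_left hPne
      have hPmem : ∀ z ∈ P, z < y := fun z hz => by simpa using mem_takeWhile_imp hz
      have hDpmem : ∀ z ∈ Dp, y ≤ z := dropWhile_ge A y hA
      have hxly : x < y := hPmem x (by rw [hPdec]; simp)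
      have hPpw : Pairwise (· ≤ ·) P := List.Pairwise.sublist (takeWhile_sublist _) hA
      have hPd_le : ∀ z ∈ Pd, z ≤ x := by
        rw [hPdec, pairwise_append] at hPpw
        exact fun z hz => hPpw.2.2 z hz x (by simp)
      have hPdpw : Pairwise (· ≤ ·) Pd := by
        have := List.Pairwise.sublist (takeWhile_sublist (fun z => decide (z < y))) hA
        rw [← hPdef, hPdec, pairwise_append] at this
        exact this.1
      have hDppw : Pairwise (· ≤ ·) Dp := List.Pairwise.sublist (dropWhile_sublist _) hA
      have hAPd : A = Pd ++ x :: Dp := by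
        rw [← hPD, hPdec]; simp
      have hrowins : rowInsert (Pd ++ y :: Dp) x = (A, some y) := by
        rw [rowInsert_some_of Pd Dp x y hPd_le hxly, hAPd]
      have hA₀pw : Pairwise (· ≤ ·) (Pd ++ y :: Dp) := by
        rw [pairwise_append]
        refine ⟨hPdpw, ?_, ?_⟩
        · rw [pairwise_cons]; exact ⟨hDpmem, hDppw⟩
        · intro z hz w hw
          rcases mem_cons.mp hw with rfl | hw
          · exact le_of_lt (lt_of_le_of_lt (hPd_le z hz) hxly)
          · exact le_trans (le_of_lt (lt_of_le_of_lt (hPd_le z hz) hxly)) (hDpmem w hw)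
      have hlenA₀ : (Pd ++ y :: Dp).length = A.length := by
        rw [hAPd]; simp
      have hPdlen : B₀.length ≤ Pd.length := by
        have : P.length = Pd.length + 1 := by rw [hPdec]; simp
        omega
      have hcol₀ : ∀ i, i < B₀.length → (Pd ++ y :: Dp).getD i 0 < B₀.getD i 0 := by
        intro i hi
        have hiPd : i < Pd.length := by omega
        have h1 : (Pd ++ y :: Dp).getD i 0 = A.getD i 0 := by
          rw [getD_append _ _ _ _ hiPd, hAPd, getD_append _ _ _ _ hiPd]
        have h2 : (B₀ ++ [y]).getD i 0 = B₀.getD i 0 := getD_append _ _ _ _ hi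
        have h3 := hcol i (by simp; omega)
        rw [h2] at h3
        rw [h1]
        exact h3
      have hBa0 : B₀.length ≤ a := by
        simp only [length_append, length_cons, length_nil] at hBa
        omega
      have hle1 : a ≤ (Pd ++ y :: Dp).length := by omega
      have hsum0 : (Pd ++ y :: Dp).length + B₀.length = a + b := by
        simp only [length_append, length_cons, length_nil] at hsum
        rw [hlenA₀]
        omega
      obtain ⟨u, v₀, hu, hv₀, hul, hv₀l, hsim₀, hX1, hX2⟩ :=
        ih (Pd ++ y :: Dp) B₀ hA₀pw (hBpair.1) hcol₀ hBa0 hle1 hsum0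
      refine ⟨u, v₀ ++ [x], hu, ?_, hul, by simp [hv₀l], ?_, ?_, ?_⟩
      · -- Pairwise (v₀ ++ [x])
        rcases v₀.eq_nil_or_concat' with rfl | ⟨t, zl, hteq⟩
        · simp
        · have hB₀len : B₀.length = b := by
            simp only [length_append, length_cons, length_nil] at hBlen ⊢
            omega
          have hzy : zl < y := by
            rcases B₀.eq_nil_or_concat' with rfl | ⟨r, q, hBdec2⟩
            · exfalso
              have : v₀.length = 0 := by rw [hv₀l, ← hB₀len]; simp
              rw [hteq] at this; simp at this
            · have hzq := hX2 (by omega) t zl hteq r q hBdec2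
              have hqy : q ≤ y := hB₀y q (by rw [hBdec2]; simp)
              omega
          obtain ⟨k, hk, hkz⟩ := hX1 t zl hteq
          have hzlx : zl ≤ x := by
            by_cases hkP : k < Pd.length
            · have hmem : (Pd ++ y :: Dp).getD k 0 ∈ Pd := by
                rw [getD_append _ _ _ _ hkP]
                exact getD_mem _ _ hkP
              rw [hkz] at hmem
              exact hPd_le zl hmem
            · exfalso
              have hge : y ≤ (Pd ++ y :: Dp).getD k 0 := by
                rw [getD_middle, if_neg hkP]
                by_cases g2 : k = Pd.length
                · rw [if_pos g2]
                · rw [if_neg g2]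
                  refine hDpmem _ (getD_mem _ _ ?_)
                  rw [hlenA₀, hAPd] at hk
                  simp only [length_append, length_cons] at hk
                  omega
              rw [hkz] at hge
              omega
          rw [pairwise_append]
          refine ⟨hv₀, pairwise_singleton _ _, ?_⟩
          intro z hz w hw
          rw [mem_singleton] at hw
          rw [hw]
          rw [hteq] at hz hv₀
          rcases mem_append.mp hz with hz | hz
          · exact le_trans ((pairwise_append.mp hv₀).2.2 z hz zl (by simp)) hzlx
          · simp only [mem_singleton] at hz; subst hz; exact hzlx
      · rw [sim_append, hsim₀]
        show step (Pd ++ y :: Dp, B₀) x = _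
        simp [step, hrowins]
      · intro t z h
        obtain ⟨ht1, ht2⟩ := append_inj' h rfl
        injection ht2 with hz _
        refine ⟨Pd.length, ?_, ?_⟩
        · rw [hAPd]; simp
        · rw [hAPd, getD_middle, if_neg (lt_irrefl _), if_pos rfl, hz]
      · intro _ t z h r q h2
        obtain ⟨ht1, ht2⟩ := append_inj' h rfl
        injection ht2 with hz _
        obtain ⟨hr1, hr2⟩ := append_inj' h2 rfl
        injection hr2 with hq _
        rw [← hz, ← hq]
        exact hxly

lemma pairwise_nil_le : Pairwise (· ≤ ·) ([] : List ℕ) := Pairwise.nil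

lemma fwd_simple (w u : List ℕ) (hw : Pairwise (· ≤ ·) w) (hu : Pairwise (· ≤ ·) u) :
    Pairwise (· ≤ ·) (sim (u, []) w).1 ∧ Pairwise (· ≤ ·) (sim (u, []) w).2 ∧
      (sim (u, []) w).2.length ≤ (sim (u, []) w).1.length ∧
      (∀ i, i < (sim (u, []) w).2.length →
        (sim (u, []) w).1.getD i 0 < (sim (u, []) w).2.getD i 0) ∧
      ((sim (u, []) w).1 = [] → (sim (u, []) w).2 = []) ∧
      List.foldl insertEntry (toTab (u, [])) w = toTab (sim (u, []) w) := by
  refine fwd w (u, []) hw hu Pairwise.nil (by simp) ?_ ?_ ?_ ?_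
  · intro x _ i hi; simp at hi
  · intro i hi; simp at hi
  · intro x _ b hb; simp at hb
  · intro _; rfl

lemma sim_inj : ∀ (n : ℕ) (u v u' v' : List ℕ),
    Pairwise (· ≤ ·) u → Pairwise (· ≤ ·) v → Pairwise (· ≤ ·) u' → Pairwise (· ≤ ·) v' →
    u.length = u'.length → v.length = v'.length → v.length = n →
    sim (u, []) v = sim (u', []) v' → u = u' ∧ v = v' := by
  intro n
  induction n with
  | zero =>
    intro u v u' v' _ _ _ _ hul hvl hn hsim
    have hv0 : v = [] := length_eq_zero_iff.mp hn
    have hv0' : v' = [] := length_eq_zero_iff.mp (by omega)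
    subst hv0 hv0'
    simp only [sim_nil] at hsim
    exact ⟨(Prod.ext_iff.mp hsim).1, rfl⟩
  | succ n ihn =>
    intro u v u' v' hu hv hu' hv' hul hvl hn hsim
    obtain ⟨w1, w2, hvsplit, hw1len, hsimw, hle2⟩ := sim_split v (u, []) hv
    obtain ⟨w1', w2', hvsplit', hw1len', hsimw', hle2'⟩ := sim_split v' (u', []) hv'
    have hw2 : w2 = (sim (u, []) v).1.drop u.length := by
      rw [hsimw]
      simp only
      rw [← hw1len]
      exact drop_left.symm
    have hw2' : w2' = (sim (u', []) v').1.drop u'.length := by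
      rw [hsimw']
      simp only
      rw [← hw1len']
      exact drop_left.symm
    have hw2eq : w2 = w2' := by rw [hw2, hw2', hsim, hul]
    have hCeq : (sim (u, []) w1).1 = (sim (u', []) w1').1 := by
      have e1 : (sim (u, []) w1).1 = (sim (u, []) v).1.take u.length := by
        rw [hsimw]; simp only; rw [← hw1len]; exact take_left.symm
      have e2 : (sim (u', []) w1').1 = (sim (u', []) v').1.take u'.length := by
        rw [hsimw']; simp only; rw [← hw1len']; exact take_left.symm
      rw [e1, e2, hsim, hul]
    have hDeq : (sim (u, []) w1).2 = (sim (u', []) w1').2 := by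
      have e1 : (sim (u, []) w1).2 = (sim (u, []) v).2 := by rw [hsimw]
      have e2 : (sim (u', []) w1').2 = (sim (u', []) v').2 := by rw [hsimw']
      rw [e1, e2, hsim]
    by_cases hw2nil : w2 = []
    · -- all letters of v bumped
      have hw2nil' : w2' = [] := hw2eq ▸ hw2nil
      have hA1len : (sim (u, []) v).1.length = u.length := by
        rw [hsimw, hw2nil]; simp [hw1len]
      have hA1len' : (sim (u', []) v').1.length = u'.length := by
        rw [hsimw', hw2nil']; simp [hw1len']
      have hB1len : (sim (u, []) v).2.length = v.length := by
        have := sim_len v (u, [])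
        simp only [length_nil] at this
        omega
      have hvne : v ≠ [] := by
        intro h; rw [h] at hn; simp at hn
      have hvne' : v' ≠ [] := by
        intro h; rw [h] at hvl; simp only [length_nil] at hvl; omega
      obtain ⟨vd, x, hvdec⟩ := v.eq_nil_or_concat'.resolve_left hvne
      obtain ⟨vd', x', hvdec'⟩ := v'.eq_nil_or_concat'.resolve_left hvne'
      have hstep : sim (u, []) v = step (sim (u, []) vd) x := by
        rw [hvdec, sim_append]; rfl
      have hstep' : sim (u', []) v' = step (sim (u', []) vd') x' := by
        rw [hvdec', sim_append]; rfl
      have hvdpw : Pairwise (· ≤ ·) vd := by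
        refine List.Pairwise.sublist ?_ hv
        rw [hvdec]; exact sublist_append_left _ _
      have hvdpw' : Pairwise (· ≤ ·) vd' := by
        refine List.Pairwise.sublist ?_ hv'
        rw [hvdec']; exact sublist_append_left _ _
      rcases rowInsert_cases (sim (u, []) vd).1 x with ⟨heq, -⟩ | ⟨T, y, Q, hd, heq, hT, hxy⟩
      · exfalso
        have hsnd : (sim (u, []) v).2 = (sim (u, []) vd).2 := by
          rw [hstep]; simp [step, heq]
        have h1 := sim_snd_len vd (u, [])
        have h2 : vd.length = v.length - 1 := by rw [hvdec]; simp
        rw [hsnd] at hB1len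
        simp only [length_nil] at h1
        omega
      rcases rowInsert_cases (sim (u', []) vd').1 x' with ⟨heq', -⟩ | ⟨T', y', Q', hd', heq', hT', hxy'⟩
      · exfalso
        have hsnd : (sim (u', []) v').2 = (sim (u', []) vd').2 := by
          rw [hstep']; simp [step, heq']
        have h1 := sim_snd_len vd' (u', [])
        have h2 : vd'.length = v'.length - 1 := by rw [hvdec']; simp
        have hB1len' : (sim (u', []) v').2.length = v'.length := by
          have := sim_len v' (u', [])
          simp only [length_nil] at this
          omega
        rw [hsnd] at hB1len'
        simp only [length_nil] at h1
        omega
      have hs1 : sim (u, []) v = ((T ++ x :: Q), (sim (u, []) vd).2 ++ [y]) := by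
        rw [hstep]; simp [step, heq]
      have hs1' : sim (u', []) v' = ((T' ++ x' :: Q'), (sim (u', []) vd').2 ++ [y']) := by
        rw [hstep']; simp [step, heq']
      have hAeq : T ++ x :: Q = T' ++ x' :: Q' := by
        have := congrArg Prod.fst (hs1.symm.trans (hsim.trans hs1'))
        simpa using this
      have hBeq : (sim (u, []) vd).2 ++ [y] = (sim (u', []) vd').2 ++ [y'] := by
        have := congrArg Prod.snd (hs1.symm.trans (hsim.trans hs1'))
        simpa using this
      obtain ⟨hD2, hy2⟩ := append_inj' hBeq rfl
      have hyy : y = y' := by injection hy2 with h _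
      have hupw1 : Pairwise (· ≤ ·) (sim (u, []) vd).1 := (fwd_simple vd u hvdpw hu).1
      have hupw1' : Pairwise (· ≤ ·) (sim (u', []) vd').1 := (fwd_simple vd' u' hvdpw' hu').1
      have hri1 : rowInsert (sim (u, []) vd).1 x = (T ++ x :: Q, some y) := heq
      have hri2 : rowInsert (sim (u', []) vd').1 x' = (T ++ x :: Q, some y) := by
        rw [heq', ← hAeq, hyy]
      obtain ⟨hAd, hxx⟩ := bump_inj hupw1 hupw1' hri1 hri2
      have hsd : sim (u, []) vd = sim (u', []) vd' := by
        exact Prod.ext_iff.mpr ⟨hAd, hD2⟩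
      have hlen1 : vd.length = n := by
        rw [hvdec] at hn; simp at hn; omega
      have hlen2 : vd.length = vd'.length := by
        rw [hvdec] at hvl; rw [hvdec'] at hvl; simp at hvl; omega
      obtain ⟨huu, hvv⟩ := ihn u vd u' vd' hu hvdpw hu' hvdpw' hul hlen2 hlen1 hsd
      refine ⟨huu, ?_⟩
      rw [hvdec, hvdec', hvv, hxx]
    · -- last letter of v was appended
      have hw2nil' : w2' ≠ [] := by rw [← hw2eq]; exact hw2nil
      obtain ⟨w2d, x, hw2dec⟩ := w2.eq_nil_or_concat'.resolve_left hw2nil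
      have hvdec : v = (w1 ++ w2d) ++ [x] := by
        rw [hvsplit, hw2dec]; simp
      have hvdec' : v' = (w1' ++ w2d) ++ [x] := by
        rw [hvsplit', ← hw2eq, hw2dec]; simp
      have hw2dpw : Pairwise (· ≤ ·) w2d := by
        refine List.Pairwise.sublist ?_ hv
        rw [hvdec]
        exact Sublist.trans (sublist_append_right w1 w2d) (sublist_append_left _ _)
      have hsimd : sim (u, []) (w1 ++ w2d) =
          ((sim (u, []) w1).1 ++ w2d, (sim (u, []) w1).2) := by
        rw [sim_append]
        refine sim_all_append w2d _ hw2dpw ?_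
        intro a ha z hz
        exact hle2 a ha z (by rw [hw2dec]; exact mem_append_left _ hz)
      have hsimd' : sim (u', []) (w1' ++ w2d) =
          ((sim (u', []) w1').1 ++ w2d, (sim (u', []) w1').2) := by
        rw [sim_append]
        refine sim_all_append w2d _ hw2dpw ?_
        intro a ha z hz
        refine hle2' a ha z ?_
        rw [← hw2eq, hw2dec]; exact mem_append_left _ hz
      have hsimdd : sim (u, []) (w1 ++ w2d) = sim (u', []) (w1' ++ w2d) := by
        rw [hsimd, hsimd', hCeq, hDeq]
      have hpwd : Pairwise (· ≤ ·) (w1 ++ w2d) := by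
        refine List.Pairwise.sublist ?_ hv
        rw [hvdec]; exact sublist_append_left _ _
      have hpwd' : Pairwise (· ≤ ·) (w1' ++ w2d) := by
        refine List.Pairwise.sublist ?_ hv'
        rw [hvdec']; exact sublist_append_left _ _
      have hl1 : (w1 ++ w2d).length = n := by
        rw [hvdec] at hn
        simp only [length_append, length_cons, length_nil] at hn ⊢
        omega
      have hl2 : (w1 ++ w2d).length = (w1' ++ w2d).length := by
        rw [hvdec] at hvl; rw [hvdec'] at hvl
        simp only [length_append, length_cons, length_nil] at hvl ⊢
        omega
      obtain ⟨huu, hvv⟩ := ihn u (w1 ++ w2d) u' (w1' ++ w2d) hu hpwd hu' hpwd' hul hl2 hl1 hsimdd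
      refine ⟨huu, ?_⟩
      rw [hvdec, hvdec', hvv]

lemma mem_take_bound {l : List ℕ} {c : ℕ} {a : ℕ} (ha : a ∈ l.take c) :
    ∃ i, i < c ∧ i < l.length ∧ l.getD i 0 = a := by
  obtain ⟨i, hi, hEq⟩ := mem_iff_getElem.mp ha
  have hlen : i < c ∧ i < l.length := by
    rw [length_take] at hi
    omega
  refine ⟨i, hlen.1, hlen.2, ?_⟩
  rw [getD_eq_getElem l 0 hlen.2, ← hEq, getElem_take]

lemma mem_drop_ge {l : List ℕ} (hp : Pairwise (· ≤ ·) l) {j x : ℕ}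
    (hx : x ∈ l.drop j) (hj : j < l.length) : l.getD j 0 ≤ x := by
  obtain ⟨t, ht, hEq⟩ := mem_iff_getElem.mp hx
  have hlen : j + t < l.length := by
    rw [length_drop] at ht
    omega
  have : (l.drop j)[t] = l[j + t]'hlen := getElem_drop
  rw [this] at hEq
  calc l.getD j 0 ≤ l.getD (j + t) 0 := pairwise_getD_mono hp (Nat.le_add_right _ _) hlen
    _ = x := by rw [getD_eq_getElem l 0 hlen, hEq]

end RowRowAux

/-- The plactic product of two row words has at most two rows; if the two-row
diagram with `R'` (length `p`) on top and `R` (length `q`) below has a violation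
in its second row, then the second row of the product `rect [R', R]` has at most
`q − 1` boxes, and there is exactly one factorization of the product into a row
of length `p+1` times a row of length `q−1`. -/
theorem row_times_row (R R' : List ℕ)
    (hR : List.Chain' (· ≤ ·) R) (hR' : List.Chain' (· ≤ ·) R') :
    (rect [R', R]).length ≤ 2 ∧
    ((∃ j, ViolAt [R', R] 1 j) →
      rowLen (rect [R', R]) 1 ≤ R.length - 1 ∧
      ∃! uv : List ℕ × List ℕ, List.Chain' (· ≤ ·) uv.1 ∧ List.Chain' (· ≤ ·) uv.2 ∧
        uv.1.length = R'.length + 1 ∧ uv.2.length = R.length - 1 ∧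
        mulT [uv.1] [uv.2] = rect [R', R]) := by
  classical
  have hRp : List.Pairwise (· ≤ ·) R := List.isChain_iff_pairwise.mp hR
  have hR'p : List.Pairwise (· ≤ ·) R' := List.isChain_iff_pairwise.mp hR'
  have h1 : mulT [] [R] = RowRowAux.toTab (R, []) := by
    have hcorr := (RowRowAux.fwd R ([], []) hRp List.Pairwise.nil List.Pairwise.nil (by simp)
      (by intro x _ i hi; simp at hi) (by intro i hi; simp at hi)
      (by intro x _ b hb; simp at hb) (fun _ => rfl)).2.2.2.2.2
    have hsim0 : RowRowAux.sim (([] : List ℕ), ([] : List ℕ)) R = (R, []) := by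
      have := RowRowAux.sim_all_append R ([], []) hRp (by intro a ha; simp at ha)
      simpa using this
    have hmt : mulT [] [R] = List.foldl insertEntry (RowRowAux.toTab ([], [])) R := by
      simp [mulT, wordOf, RowRowAux.toTab]
    rw [hmt, hcorr, hsim0]
  have hfwd := RowRowAux.fwd_simple R' R hR'p hRp
  have h2 : rect [R', R] = RowRowAux.toTab (RowRowAux.sim (R, []) R') := by
    have hr : rect [R', R] = mulT (mulT [] [R]) [R'] := by simp [rect]
    rw [hr, h1]
    have hmt : mulT (RowRowAux.toTab (R, [])) [R'] =
        List.foldl insertEntry (RowRowAux.toTab (R, [])) R' := by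
      simp [mulT, wordOf]
    rw [hmt]
    exact hfwd.2.2.2.2.2
  constructor
  · rw [h2, RowRowAux.toTab]
    split_ifs <;> simp
  · rintro ⟨j, hviol⟩
    obtain ⟨-, -, hjq, hdisj⟩ := hviol
    have hjq' : j < R.length := hjq
    have hdisj' : R'.length ≤ j ∨ R.getD j 0 ≤ R'.getD j 0 := hdisj
    have hq1 : 1 ≤ R.length := by omega
    have hABlen := RowRowAux.sim_len R' (R, [])
    have hBp := RowRowAux.sim_snd_len R' (R, [])
    simp only [List.length_nil] at hABlen hBp
    -- key bound: second row has at most R.length - 1 boxes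
    have hmb : (RowRowAux.sim (R, []) R').2.length ≤ R.length - 1 := by
      by_cases hjp : j < R'.length
      · rcases hdisj' with hca | hca
        · exact absurd hca (Nat.not_le.mpr hjp)
        · have hsplit : RowRowAux.sim (R, []) R' =
              RowRowAux.sim (RowRowAux.sim (R, []) (R'.take j)) (R'.drop j) := by
            rw [← RowRowAux.sim_append, List.take_append_drop]
          have hs1len := RowRowAux.sim_len (R'.take j) (R, [])
          simp only [List.length_nil, List.length_take] at hs1len
          rw [min_eq_left (le_of_lt hjp)] at hs1len
          have hs1fst := RowRowAux.sim_fst_len (R'.take j) (R, [])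
          simp only at hs1fst
          have hbound := RowRowAux.sim_snd_le (R'.drop j)
            (RowRowAux.sim (R, []) (R'.take j)) (j + 1)
            (List.Pairwise.sublist (List.drop_sublist _ _) hR'p) ?_
          · rw [hsplit]
            omega
          · intro x hx a ha
            obtain ⟨i, hic, hil, hia⟩ := RowRowAux.mem_take_bound ha
            have hiR : i < R.length := by omega
            have e1 : a ≤ R.getD i 0 := by
              rw [← hia]
              exact RowRowAux.sim_fst_getD_le (R'.take j) (R, []) i hiR
            have e2 : R.getD i 0 ≤ R.getD j 0 :=
              RowRowAux.pairwise_getD_mono hRp (by omega) hjq'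
            have e3 : R'.getD j 0 ≤ x := RowRowAux.mem_drop_ge hR'p hx hjp
            omega
      · omega
    refine ⟨?_, ?_⟩
    · rw [h2, RowRowAux.toTab]
      split_ifs with g1 g2
      · simp [rowLen]
      · simp [rowLen]
      · simpa [rowLen] using hmb
    · -- the unique factorization
      have hA1pw := hfwd.1
      have hB1pw := hfwd.2.1
      have hcolstr := hfwd.2.2.2.1
      obtain ⟨u, v, hu, hv, hul, hvl, hsimuv, -, -⟩ :=
        RowRowAux.exists_fact (R'.length + 1) (R.length - 1)
          (RowRowAux.sim (R, []) R').1 (RowRowAux.sim (R, []) R').2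
          hA1pw hB1pw hcolstr (by omega) (by omega) (by omega)
      have hmul : ∀ u₂ v₂ : List ℕ, List.Pairwise (· ≤ ·) u₂ → List.Pairwise (· ≤ ·) v₂ →
          u₂.length = R'.length + 1 →
          mulT [u₂] [v₂] = RowRowAux.toTab (RowRowAux.sim (u₂, []) v₂) := by
        intro u₂ v₂ hu₂ hv₂ hul₂
        have h3 : mulT [u₂] [v₂] = List.foldl insertEntry [u₂] v₂ := by
          simp [mulT, wordOf]
        have hne : u₂ ≠ [] := by
          intro h; rw [h] at hul₂; simp at hul₂
        have h4 : RowRowAux.toTab (u₂, []) = [u₂] := by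
          simp [RowRowAux.toTab, hne]
        rw [h3, ← h4]
        exact (RowRowAux.fwd_simple v₂ u₂ hv₂ hu₂).2.2.2.2.2
      refine ⟨(u, v), ⟨List.isChain_iff_pairwise.mpr hu, List.isChain_iff_pairwise.mpr hv,
        hul, hvl, ?_⟩, ?_⟩
      · rw [hmul u v hu hv hul, hsimuv, h2]
      · rintro ⟨u₂, v₂⟩ ⟨hc1, hc2, hl1, hl2, hmuleq⟩
        simp only at hc1 hc2 hl1 hl2 hmuleq
        have hu₂ := List.isChain_iff_pairwise.mp hc1
        have hv₂ := List.isChain_iff_pairwise.mp hc2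
        rw [hmul u₂ v₂ hu₂ hv₂ hl1, h2] at hmuleq
        have hfst2 := RowRowAux.sim_fst_len v₂ (u₂, [])
        simp only at hfst2
        have hne1 : (RowRowAux.sim (u₂, []) v₂).1 ≠ [] := by
          intro h
          rw [h] at hfst2
          simp only [List.length_nil] at hfst2
          omega
        have hfst1 := RowRowAux.sim_fst_len R' (R, [])
        simp only at hfst1
        have hne2 : (RowRowAux.sim (R, []) R').1 ≠ [] := by
          intro h
          rw [h] at hfst1
          simp only [List.length_nil] at hfst1
          omega
        have heqs := RowRowAux.toTab_inj hne1 hne2 hmuleq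
        have hfin := RowRowAux.sim_inj v₂.length u₂ v₂ u v hu₂ hv₂ hu hv
          (by omega) (by omega) rfl (heqs.trans hsimuv.symm)
        exact Prod.ext_iff.mpr ⟨hfin.1, hfin.2⟩
end
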